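/- arXiv:2510.03482 — 7 statements merged into one kernel-verified Lean document; each statement's English description precedes it below -/
import Mathlib

section
/- (Data processing inequality for multivariate f-divergences) For any Markov kernel K from a finite set Ω to a finite set Z, and distributions P₁,…,Pₙ, α on Ω, D_f(P₁,…,Pₙ ∥ α) ≥ D_f(K∘P₁,…,K∘Pₙ ∥ K∘α), where (K∘μ)(z) = Σ_{ω} K_ω(z) μ(ω). -/
open scoped ENNReal BigOperators

/-- A probability mass function on a finite set. -/
def IsPMF {Ω : Type*} [Fintype Ω] (p : Ω → ℝ) : Prop :=
  (∀ ω, 0 ≤ p ω) ∧ ∑ ω, p ω = 1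

/-- Convexity of an `[0,∞]`-valued function on the nonnegative orthant. -/
def ConvexOnNonneg {n : Type*} (f : (n → ℝ) → ℝ≥0∞) : Prop :=
  ∀ x y : n → ℝ, (∀ i, 0 ≤ x i) → (∀ i, 0 ≤ y i) →
    ∀ a b : ℝ, 0 ≤ a → 0 ≤ b → a + b = 1 →
      f (fun i => a * x i + b * y i) ≤ ENNReal.ofReal a * f x + ENNReal.ofReal b * f y

/-- The recession function of `f` at `x`, computed from the base point `(1,…,1)` in the
effective domain (since `f(1,…,1) = 0`): `lim_{t→∞} f(𝟙 + t x)/t = ⨆_{t>0} f(𝟙 + t x)/t`. -/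
noncomputable def recessionAt {n : Type*} (f : (n → ℝ) → ℝ≥0∞) (x : n → ℝ) : ℝ≥0∞ :=
  ⨆ t : {t : ℝ // 0 < t}, f (fun i => 1 + (t : ℝ) * x i) / ENNReal.ofReal (t : ℝ)

/-- Multivariate `f`-divergence, with the recession-function convention
`0 · f(x/0) = lim_{t→∞} f(y + t x)/t` when `α ω = 0`. -/
noncomputable def Df {n Ω : Type*} [Fintype Ω] (f : (n → ℝ) → ℝ≥0∞)
    (P : n → Ω → ℝ) (α : Ω → ℝ) : ℝ≥0∞ :=
  ∑ ω, if α ω = 0 then recessionAt f (fun i => P i ω)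
    else ENNReal.ofReal (α ω) * f (fun i => P i ω / α ω)

/-!
The closed perspective `g(x, a) = a · f(x / a)` of `f`, extended by the recession function
`f∞(x)` at `a = 0`, is sublinear on the nonnegative orthant: positively homogeneous and
subadditive. Subadditivity is convexity of `f` where both weights are positive, subadditivity of
`f∞` where both vanish, and `f(u + v) ≤ f(u) + f∞(v)` (the one place lower semicontinuity enters)
in the mixed case. Since `(K∘P(z), K∘α(z)) = ∑_ω K_ω(z) · (P(ω), α(ω))`, sublinearity bounds each
term of the garbled divergence by `∑_ω K_ω(z) · g(P(ω), α(ω))`, and summing over `z` with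
`∑_z K_ω(z) = 1` gives the inequality.
-/

open Filter Topology

section Recession

variable {n : Type*} {f : (n → ℝ) → ℝ≥0∞}

theorem le_ofReal_mul_recessionAt {x : n → ℝ} {t : ℝ} (ht : 0 < t) :
    f (fun i => 1 + t * x i) ≤ ENNReal.ofReal t * recessionAt f x := by
  rw [mul_comm, ← ENNReal.div_le_iff (ENNReal.ofReal_pos.mpr ht).ne' ENNReal.ofReal_ne_top]
  exact le_iSup (fun s : {t : ℝ // 0 < t} => f (fun i => 1 + (s : ℝ) * x i) / ENNReal.ofReal s)
    ⟨t, ht⟩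

theorem recessionAt_le {x : n → ℝ} {C : ℝ≥0∞}
    (h : ∀ t : ℝ, 0 < t → f (fun i => 1 + t * x i) ≤ ENNReal.ofReal t * C) :
    recessionAt f x ≤ C :=
  iSup_le fun t => by
    rw [ENNReal.div_le_iff (ENNReal.ofReal_pos.mpr t.2).ne' ENNReal.ofReal_ne_top, mul_comm]
    exact h t t.2

theorem recessionAt_zero (hf1 : f (fun _ => 1) = 0) : recessionAt f 0 = 0 :=
  le_antisymm (recessionAt_le fun _ _ => by simp [hf1]) bot_le

theorem recessionAt_smul_le {x : n → ℝ} {c : ℝ} (hc : 0 < c) :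
    recessionAt f (c • x) ≤ ENNReal.ofReal c * recessionAt f x :=
  recessionAt_le fun t ht =>
    calc f (fun i => 1 + t * (c • x) i) = f (fun i => 1 + (t * c) * x i) := by
          simp only [Pi.smul_apply, smul_eq_mul, mul_assoc]
      _ ≤ ENNReal.ofReal (t * c) * recessionAt f x := le_ofReal_mul_recessionAt (mul_pos ht hc)
      _ = ENNReal.ofReal t * (ENNReal.ofReal c * recessionAt f x) := by
          rw [ENNReal.ofReal_mul ht.le, mul_assoc]

theorem recessionAt_add_le (hconv : ConvexOnNonneg f) {x y : n → ℝ} (hx : 0 ≤ x) (hy : 0 ≤ y) :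
    recessionAt f (x + y) ≤ recessionAt f x + recessionAt f y :=
  recessionAt_le fun t ht => by
    have h2t : 0 < 2 * t := by positivity
    have hx' : ∀ i, 0 ≤ 1 + 2 * t * x i := fun i => add_nonneg zero_le_one (mul_nonneg h2t.le (hx i))
    have hy' : ∀ i, 0 ≤ 1 + 2 * t * y i := fun i => add_nonneg zero_le_one (mul_nonneg h2t.le (hy i))
    calc f (fun i => 1 + t * (x + y) i)
        = f (fun i => 2⁻¹ * (1 + 2 * t * x i) + 2⁻¹ * (1 + 2 * t * y i)) := by
          congr 1; ext i; simp only [Pi.add_apply]; ring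
      _ ≤ ENNReal.ofReal 2⁻¹ * f (fun i => 1 + 2 * t * x i)
            + ENNReal.ofReal 2⁻¹ * f (fun i => 1 + 2 * t * y i) :=
          hconv _ _ hx' hy' _ _ (by norm_num) (by norm_num) (by norm_num)
      _ ≤ ENNReal.ofReal 2⁻¹ * (ENNReal.ofReal (2 * t) * recessionAt f x)
            + ENNReal.ofReal 2⁻¹ * (ENNReal.ofReal (2 * t) * recessionAt f y) := by
          gcongr <;> exact le_ofReal_mul_recessionAt h2t
      _ = ENNReal.ofReal t * (recessionAt f x + recessionAt f y) := by
          rw [← mul_assoc, ← mul_assoc, ← ENNReal.ofReal_mul (by norm_num),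
            inv_mul_cancel_left₀ two_ne_zero, mul_add]

/-- `u + v` is the limit of the convex combinations `(1 - t⁻¹) u + t⁻¹ (1 + t v)` as `t → ∞`. -/
theorem apply_add_le_add_recessionAt (hconv : ConvexOnNonneg f)
    (hlsc : LowerSemicontinuousOn f {x | ∀ i, 0 ≤ x i}) {u v : n → ℝ} (hu : 0 ≤ u) (hv : 0 ≤ v) :
    f (u + v) ≤ f u + recessionAt f v := by
  set w : ℝ → n → ℝ := fun t i => (1 - t⁻¹) * u i + t⁻¹ * (1 + t * v i)
  have hw_le : ∀ t, 1 ≤ t → f (w t) ≤ f u + recessionAt f v := fun t ht => by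
    have ht0 : 0 < t := by linarith
    calc f (w t) ≤ ENNReal.ofReal (1 - t⁻¹) * f u
          + ENNReal.ofReal t⁻¹ * f (fun i => 1 + t * v i) :=
          hconv _ _ hu (fun i => add_nonneg zero_le_one (mul_nonneg ht0.le (hv i))) _ _
            (sub_nonneg.2 (inv_le_one_of_one_le₀ ht)) (inv_nonneg.2 ht0.le) (sub_add_cancel 1 _)
      _ ≤ 1 * f u + ENNReal.ofReal t⁻¹ * (ENNReal.ofReal t * recessionAt f v) := by
          gcongr
          · exact ENNReal.ofReal_le_one.2 (by linarith [inv_nonneg.2 ht0.le])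
          · exact le_ofReal_mul_recessionAt ht0
      _ = f u + recessionAt f v := by
          rw [one_mul, ← mul_assoc, ← ENNReal.ofReal_mul (inv_nonneg.2 ht0.le),
            inv_mul_cancel₀ ht0.ne', ENNReal.ofReal_one, one_mul]
  have hw_tendsto : Tendsto w atTop (𝓝[{x | ∀ i, 0 ≤ x i}] (u + v)) := by
    refine tendsto_nhdsWithin_iff.2 ⟨?_, ?_⟩
    · have h : Tendsto (fun t : ℝ => (u + v) + t⁻¹ • (1 - u)) atTop (𝓝 (u + v)) := by
        simpa using ((tendsto_inv_atTop_zero (𝕜 := ℝ)).smul_const (1 - u)).const_add (u + v)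
      refine h.congr' ?_
      filter_upwards [eventually_ne_atTop 0] with t ht
      ext i
      simp only [w, Pi.add_apply, Pi.smul_apply, Pi.sub_apply, Pi.one_apply, smul_eq_mul]
      field_simp
      ring
    · filter_upwards [eventually_ge_atTop 1] with t ht i
      have ht0 : 0 < t := by linarith
      exact add_nonneg (mul_nonneg (sub_nonneg.2 (inv_le_one_of_one_le₀ ht)) (hu i))
        (mul_nonneg (inv_nonneg.2 ht0.le) (add_nonneg zero_le_one (mul_nonneg ht0.le (hv i))))
  refine le_of_forall_lt fun c hc => ?_
  obtain ⟨t, hct, ht⟩ :=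
    ((hw_tendsto.eventually (hlsc _ (add_nonneg hu hv) c hc)).and (eventually_ge_atTop 1)).exists
  exact hct.trans_le (hw_le t ht)

end Recession

noncomputable def perspective {n : Type*} (f : (n → ℝ) → ℝ≥0∞) (x : n → ℝ) (a : ℝ) : ℝ≥0∞ :=
  if a = 0 then recessionAt f x else ENNReal.ofReal a * f (fun i => x i / a)

theorem Df_eq_sum_perspective {n Ω : Type*} [Fintype Ω] (f : (n → ℝ) → ℝ≥0∞)
    (P : n → Ω → ℝ) (α : Ω → ℝ) :
    Df f P α = ∑ ω, perspective f (fun i => P i ω) (α ω) :=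
  rfl

section Perspective

variable {n : Type*} {f : (n → ℝ) → ℝ≥0∞}

theorem perspective_zero_right (x : n → ℝ) : perspective f x 0 = recessionAt f x :=
  if_pos rfl

theorem perspective_of_ne_zero (x : n → ℝ) {a : ℝ} (ha : a ≠ 0) :
    perspective f x a = ENNReal.ofReal a * f (fun i => x i / a) :=
  if_neg ha

theorem perspective_smul_le (hf1 : f (fun _ => 1) = 0) {x : n → ℝ} {a c : ℝ} (hc : 0 ≤ c) :
    perspective f (c • x) (c * a) ≤ ENNReal.ofReal c * perspective f x a := by
  rcases hc.eq_or_lt with rfl | hc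
  · simp [perspective_zero_right, recessionAt_zero hf1]
  by_cases ha : a = 0
  · subst ha
    simpa [perspective_zero_right] using recessionAt_smul_le hc
  · rw [perspective_of_ne_zero _ (mul_ne_zero hc.ne' ha), perspective_of_ne_zero _ ha,
      ENNReal.ofReal_mul hc.le, mul_assoc]
    refine le_of_eq (congrArg _ (congrArg _ (congrArg f (funext fun i => ?_))))
    simp only [Pi.smul_apply, smul_eq_mul]
    field_simp

theorem perspective_add_le_of_pos (hconv : ConvexOnNonneg f) {x y : n → ℝ} {a b : ℝ}
    (hx : 0 ≤ x) (hy : 0 ≤ y) (ha : 0 < a) (hb : 0 < b) :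
    perspective f (x + y) (a + b) ≤ perspective f x a + perspective f y b := by
  have hab : 0 < a + b := add_pos ha hb
  rw [perspective_of_ne_zero _ hab.ne', perspective_of_ne_zero _ ha.ne',
    perspective_of_ne_zero _ hb.ne']
  have hcomb : (fun i => (x + y) i / (a + b))
      = fun i => a / (a + b) * (x i / a) + b / (a + b) * (y i / b) := by
    ext i
    simp only [Pi.add_apply]
    field_simp
  calc ENNReal.ofReal (a + b) * f (fun i => (x + y) i / (a + b))
      ≤ ENNReal.ofReal (a + b) * (ENNReal.ofReal (a / (a + b)) * f (fun i => x i / a)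
          + ENNReal.ofReal (b / (a + b)) * f (fun i => y i / b)) := by
        rw [hcomb]
        gcongr
        exact hconv _ _ (fun i => div_nonneg (hx i) ha.le) (fun i => div_nonneg (hy i) hb.le) _ _
          (by positivity) (by positivity) (by field_simp)
    _ = ENNReal.ofReal a * f (fun i => x i / a) + ENNReal.ofReal b * f (fun i => y i / b) := by
        rw [mul_add, ← mul_assoc, ← mul_assoc, ← ENNReal.ofReal_mul hab.le,
          ← ENNReal.ofReal_mul hab.le, mul_div_cancel₀ _ hab.ne', mul_div_cancel₀ _ hab.ne']

theorem perspective_add_le_add_recessionAt (hconv : ConvexOnNonneg f)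
    (hlsc : LowerSemicontinuousOn f {x | ∀ i, 0 ≤ x i}) {x y : n → ℝ} {a : ℝ}
    (hx : 0 ≤ x) (hy : 0 ≤ y) (ha : 0 < a) :
    perspective f (x + y) a ≤ perspective f x a + recessionAt f y := by
  rw [perspective_of_ne_zero _ ha.ne', perspective_of_ne_zero _ ha.ne']
  have hsplit : (fun i => (x + y) i / a) = (fun i => x i / a) + a⁻¹ • y := by
    ext i
    simp only [Pi.add_apply, Pi.smul_apply, smul_eq_mul]
    ring
  calc ENNReal.ofReal a * f (fun i => (x + y) i / a)
      ≤ ENNReal.ofReal a * (f (fun i => x i / a) + recessionAt f (a⁻¹ • y)) := by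
        rw [hsplit]
        gcongr
        exact apply_add_le_add_recessionAt hconv hlsc (fun i => div_nonneg (hx i) ha.le)
          (smul_nonneg (inv_nonneg.2 ha.le) hy)
    _ ≤ ENNReal.ofReal a * (f (fun i => x i / a) + ENNReal.ofReal a⁻¹ * recessionAt f y) := by
        gcongr
        exact recessionAt_smul_le (inv_pos.2 ha)
    _ = ENNReal.ofReal a * f (fun i => x i / a) + recessionAt f y := by
        rw [mul_add, ← mul_assoc, ← ENNReal.ofReal_mul ha.le, mul_inv_cancel₀ ha.ne',
          ENNReal.ofReal_one, one_mul]

theorem perspective_add_le (hconv : ConvexOnNonneg f)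
    (hlsc : LowerSemicontinuousOn f {x | ∀ i, 0 ≤ x i}) {x y : n → ℝ} {a b : ℝ}
    (hx : 0 ≤ x) (hy : 0 ≤ y) (ha : 0 ≤ a) (hb : 0 ≤ b) :
    perspective f (x + y) (a + b) ≤ perspective f x a + perspective f y b := by
  rcases ha.eq_or_lt with rfl | ha <;> rcases hb.eq_or_lt with rfl | hb
  · simpa [perspective_zero_right] using recessionAt_add_le hconv hx hy
  · rw [zero_add, add_comm x, add_comm (perspective f x 0), perspective_zero_right]
    exact perspective_add_le_add_recessionAt hconv hlsc hy hx hb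
  · rw [add_zero, perspective_zero_right]
    exact perspective_add_le_add_recessionAt hconv hlsc hx hy ha
  · exact perspective_add_le_of_pos hconv hx hy ha hb

theorem perspective_sum_le {ι : Type*} (hconv : ConvexOnNonneg f)
    (hlsc : LowerSemicontinuousOn f {x | ∀ i, 0 ≤ x i}) (hf1 : f (fun _ => 1) = 0)
    (s : Finset ι) {c : ι → ℝ} {x : ι → n → ℝ} {a : ι → ℝ}
    (hc : ∀ j, 0 ≤ c j) (hx : ∀ j, 0 ≤ x j) (ha : ∀ j, 0 ≤ a j) :
    perspective f (∑ j ∈ s, c j • x j) (∑ j ∈ s, c j * a j)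
      ≤ ∑ j ∈ s, ENNReal.ofReal (c j) * perspective f (x j) (a j) := by
  induction s using Finset.cons_induction with
  | empty => simp [perspective_zero_right, recessionAt_zero hf1]
  | cons j s hj ih =>
    rw [Finset.sum_cons, Finset.sum_cons, Finset.sum_cons]
    calc _ ≤ perspective f (c j • x j) (c j * a j)
          + perspective f (∑ k ∈ s, c k • x k) (∑ k ∈ s, c k * a k) :=
          perspective_add_le hconv hlsc (smul_nonneg (hc j) (hx j))
            (Finset.sum_nonneg fun k _ => smul_nonneg (hc k) (hx k))
            (mul_nonneg (hc j) (ha j)) (Finset.sum_nonneg fun k _ => mul_nonneg (hc k) (ha k))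
      _ ≤ _ := add_le_add (perspective_smul_le hf1 (hc j)) ih

end Perspective

theorem stmt1_general {n Ω Z : Type*} [Fintype Ω] [Fintype Z]
    (f : (n → ℝ) → ℝ≥0∞) (hconv : ConvexOnNonneg f)
    (hlsc : LowerSemicontinuousOn f {x | ∀ i, 0 ≤ x i})
    (hf1 : f (fun _ => 1) = 0)
    (P : n → Ω → ℝ) (α : Ω → ℝ) (hP : ∀ i, IsPMF (P i)) (hα : IsPMF α)
    (K : Ω → Z → ℝ) (hK : ∀ ω, IsPMF (K ω)) :
    Df f (fun i z => ∑ ω, K ω z * P i ω) (fun z => ∑ ω, K ω z * α ω) ≤ Df f P α := by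
  have hK_sum : ∀ ω, ∑ z, ENNReal.ofReal (K ω z) = 1 := fun ω => by
    rw [← ENNReal.ofReal_sum_of_nonneg fun z _ => (hK ω).1 z, (hK ω).2, ENNReal.ofReal_one]
  calc Df f (fun i z => ∑ ω, K ω z * P i ω) (fun z => ∑ ω, K ω z * α ω)
      = ∑ z, perspective f (∑ ω, K ω z • fun i => P i ω) (∑ ω, K ω z * α ω) := by
        simp only [Df_eq_sum_perspective, Finset.sum_fn, Pi.smul_def, smul_eq_mul]
    _ ≤ ∑ z, ∑ ω, ENNReal.ofReal (K ω z) * perspective f (fun i => P i ω) (α ω) :=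
        Finset.sum_le_sum fun z _ => perspective_sum_le hconv hlsc hf1 _
          (fun ω => (hK ω).1 z) (fun ω i => (hP i).1 ω) hα.1
    _ = Df f P α := by
        rw [Finset.sum_comm, Df_eq_sum_perspective]
        simp_rw [← Finset.sum_mul, hK_sum, one_mul]

/-- Data processing inequality: garbling all distributions by a common Markov kernel `K`
decreases the multivariate `f`-divergence. -/
theorem stmt1 {n Ω Z : Type*} [Fintype n] [Fintype Ω] [Fintype Z]
    (f : (n → ℝ) → ℝ≥0∞) (hconv : ConvexOnNonneg f)
    (hlsc : LowerSemicontinuousOn f {x | ∀ i, 0 ≤ x i})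
    (hf1 : f (fun _ => 1) = 0)
    (P : n → Ω → ℝ) (α : Ω → ℝ) (hP : ∀ i, IsPMF (P i)) (hα : IsPMF α)
    (K : Ω → Z → ℝ) (hK : ∀ ω, IsPMF (K ω)) :
    Df f (fun i z => ∑ ω, K ω z * P i ω) (fun z => ∑ ω, K ω z * α ω) ≤ Df f P α :=
  stmt1_general f hconv hlsc hf1 P α hP hα K hK
end

section
/- For a Csiszár transformation f(x) = Σ_θ π(θ) φ(x(θ)) with φ: ℝ₊ → [0,∞] convex, lower semicontinuous and ψ(t) = sup_{s ≥ 0}(ts − φ(s)) its conjugate, the Fenchel conjugate of f over ℝ₊^Θ equals f*(x) = Σ_θ π(θ) ψ(x(θ)/π(θ)). -/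
/-!
The objective `⟨x, y⟩ − f(y)` is a sum of functions of the separate coordinates `y(θ)`,
so its supremum over `ℝ₊^Θ` is the sum of the coordinatewise suprema; and the
coordinatewise conjugate of `π(θ)·φ` at `t` is `π(θ)·ψ(t/π(θ))`. Working in `EReal`
handles `φ = ∞` uniformly, since the values `f(y)` never reach `⊥`.
-/

open scoped ENNReal BigOperators

/-- The Fenchel conjugate over the nonnegative orthant of an `[0,∞]`-valued function,
with values in the extended reals: `f*(x) = sup_{y ≥ 0} ⟨x,y⟩ − f(y)`. -/
noncomputable def conjOrthant {Θ : Type*} [Fintype Θ] (f : (Θ → ℝ) → ℝ≥0∞)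
    (x : Θ → ℝ) : EReal :=
  ⨆ y : {y : Θ → ℝ // ∀ θ, 0 ≤ y θ},
    ((∑ θ, x θ * y.1 θ : ℝ) : EReal) - (f y.1 : EReal)

/-- The one-dimensional conjugate `ψ(t) = sup_{s ≥ 0} (t·s − φ(s))`. -/
noncomputable def conj1 (φ : ℝ → ℝ≥0∞) (t : ℝ) : EReal :=
  ⨆ s : {s : ℝ // 0 ≤ s}, ((t * s.1 : ℝ) : EReal) - (φ s.1 : EReal)

namespace EReal

lemma coe_mul_iSup_of_pos {ι : Sort*} {c : ℝ} (hc : 0 < c) (f : ι → EReal) :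
    (c : EReal) * ⨆ i, f i = ⨆ i, (c : EReal) * f i := by
  have hc' : (0 : EReal) < c := EReal.coe_pos.2 hc
  refine le_antisymm ?_ (iSup_le fun i => mul_le_mul_of_nonneg_left (le_iSup f i) hc'.le)
  rw [mul_comm, ← le_div_iff_mul_le hc' (coe_ne_top c)]
  exact iSup_le fun i => (le_div_iff_mul_le hc' (coe_ne_top c)).2
    (mul_comm (f i) c ▸ le_iSup (fun i => (c : EReal) * f i) i)

lemma sum_iSup {ι : Type*} {κ : ι → Type*} [∀ i, Nonempty (κ i)]
    (s : Finset ι) (f : (i : ι) → κ i → EReal) :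
    ∑ i ∈ s, ⨆ j, f i j = ⨆ g : (i : ι) → κ i, ∑ i ∈ s, f i (g i) := by
  classical
  induction s using Finset.induction_on with
  | empty => simp
  | @insert a s ha ih =>
    rw [Finset.sum_insert ha, ih]
    refine le_antisymm (add_le_of_forall_lt fun u hu v hv => ?_)
      (iSup_le fun g => (Finset.sum_insert ha).trans_le (add_le_add (le_iSup (f a) (g a))
        (le_iSup (fun g : (i : ι) → κ i => ∑ i ∈ s, f i (g i)) g)))
    obtain ⟨j, hj⟩ := lt_iSup_iff.1 hu
    obtain ⟨g, hg⟩ := lt_iSup_iff.1 hv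
    have hsum : ∑ i ∈ s, f i (Function.update g a j i) = ∑ i ∈ s, f i (g i) :=
      Finset.sum_congr rfl fun i hi => by rw [Function.update_of_ne (ne_of_mem_of_not_mem hi ha)]
    calc u + v ≤ f a j + ∑ i ∈ s, f i (g i) := add_le_add hj.le hg.le
      _ = ∑ i ∈ insert a s, f i (Function.update g a j i) := by
        rw [Finset.sum_insert ha, Function.update_self, hsum]
      _ ≤ _ := le_iSup (fun g : (i : ι) → κ i => ∑ i ∈ insert a s, f i (g i)) _

lemma coe_add_sub_coe_ennreal_add (a b : ℝ) (c d : ℝ≥0∞) :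
    ((a + b : ℝ) : EReal) - ((c + d : ℝ≥0∞) : EReal)
      = ((a : EReal) - c) + ((b : EReal) - d) := by
  rw [coe_add, coe_ennreal_add, sub_eq_add_neg,
    EReal.neg_add (.inl (coe_ennreal_ne_bot c)) (.inr (coe_ennreal_ne_bot d)),
    sub_eq_add_neg (-(c : EReal)), add_add_add_comm, ← sub_eq_add_neg, ← sub_eq_add_neg]

lemma coe_sum_sub_coe_ennreal_sum {ι : Type*} (s : Finset ι) (a : ι → ℝ)
    (b : ι → ℝ≥0∞) :
    ((∑ i ∈ s, a i : ℝ) : EReal) - ((∑ i ∈ s, b i : ℝ≥0∞) : EReal)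
      = ∑ i ∈ s, ((a i : EReal) - b i) := by
  classical
  induction s using Finset.induction_on with
  | empty => simp
  | @insert j s hj ih =>
    rw [Finset.sum_insert hj, Finset.sum_insert hj, Finset.sum_insert hj,
      coe_add_sub_coe_ennreal_add, ih]

end EReal

lemma coe_mul_conj1_div {c : ℝ} (hc : 0 < c) (φ : ℝ → ℝ≥0∞) (t : ℝ) :
    (c : EReal) * conj1 φ (t / c) =
      ⨆ s : {s : ℝ // 0 ≤ s},
        ((t * s.1 : ℝ) : EReal) - (ENNReal.ofReal c * φ s.1 : ℝ≥0∞) := by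
  rw [conj1, EReal.coe_mul_iSup_of_pos hc]
  refine iSup_congr fun s => ?_
  have hscale : c * (t / c * s) = t * s := by field_simp
  rw [EReal.mul_sub_of_nonneg_of_ne_top (EReal.coe_nonneg.2 hc.le) (EReal.coe_ne_top c),
    ← EReal.coe_mul, hscale, EReal.coe_ennreal_mul, EReal.coe_ennreal_ofReal,
    max_eq_left hc.le]

theorem stmt7_general {Θ : Type*} [Fintype Θ]
    (π : Θ → ℝ) (hπpos : ∀ θ, 0 < π θ)
    (φ : ℝ → ℝ≥0∞)
    (x : Θ → ℝ) :
    conjOrthant (fun y => ∑ θ, ENNReal.ofReal (π θ) * φ (y θ)) x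
      = ∑ θ, ((π θ : ℝ) : EReal) * conj1 φ (x θ / π θ) := by
  simp_rw [coe_mul_conj1_div (hπpos _), EReal.sum_iSup, conjOrthant,
    EReal.coe_sum_sub_coe_ennreal_sum]
  exact Equiv.subtypePiEquivPi.iSup_congr fun _ => rfl

/-- For a Csiszár transformation `f(x) = Σ_θ π(θ) φ(x(θ))`, the Fenchel conjugate over
`ℝ₊^Θ` equals `f*(x) = Σ_θ π(θ) ψ(x(θ)/π(θ))`, where `ψ = φ*`. -/
theorem stmt7 {Θ : Type*} [Fintype Θ]
    (π : Θ → ℝ) (hπ : IsPMF π) (hπpos : ∀ θ, 0 < π θ)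
    (φ : ℝ → ℝ≥0∞)
    (hφconv : ∀ s t : ℝ, 0 ≤ s → 0 ≤ t → ∀ a b : ℝ, 0 ≤ a → 0 ≤ b → a + b = 1 →
        φ (a * s + b * t) ≤ ENNReal.ofReal a * φ s + ENNReal.ofReal b * φ t)
    (hφlsc : LowerSemicontinuousOn φ (Set.Ici 0)) (hφ1 : φ 1 = 0)
    (x : Θ → ℝ) :
    conjOrthant (fun y => ∑ θ, ENNReal.ofReal (π θ) * φ (y θ)) x
      = ∑ θ, ((π θ : ℝ) : EReal) * conj1 φ (x θ / π θ) :=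
  stmt7_general π hπpos φ x
end

section
/- A function g: ℝ^Θ → (−∞,∞] is the Fenchel conjugate of some f: ℝ₊^Θ → [0,∞] that is convex, lower semicontinuous, and satisfies f(1,…,1)=0 if and only if g is convex, lower semicontinuous, monotone (x ≤ y pointwise implies g(x) ≤ g(y)), g(0)=0, and the all-ones vector 1 lies in the subdifferential of g at 0. -/
open scoped ENNReal BigOperators

/-- Convexity of an extended-real-valued function on a real vector space. -/
def ConvexFnEReal {E : Type*} [AddCommMonoid E] [SMul ℝ E] (g : E → EReal) : Prop :=
  ∀ x y : E, ∀ a b : ℝ, 0 ≤ a → 0 ≤ b → a + b = 1 →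
    g (a • x + b • y) ≤ (a : EReal) * g x + (b : EReal) * g y

/-!
The forward direction is formal: `conjOrthant f` is a supremum of the affine functions
`x ↦ ⟨x, y⟩ - f y` with `y ≥ 0`, hence convex, lower semicontinuous and monotone; the term
`y = 1` gives `g x ≥ ∑ x`, and `f ≥ 0` gives `g 0 ≤ 0`.

Conversely take `f = g*`, the full Fenchel conjugate. It is `≥ 0` since `g 0 = 0` and vanishes
at `1` since `⟨1, ·⟩ ≤ g`. Fenchel–Moreau gives `g = g**`: a real `r < g x` is beaten by an
affine minorant of `g`, obtained by separating `(x, r)` from the closed convex epigraph. Such a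
minorant `⟨z, ·⟩ - v` satisfies `⟨z, w⟩ ≤ v` for all `w ≤ 0` because `g` is monotone, so `z ≥ 0`
and the supremum defining `g**` may be restricted to the orthant.
-/

lemma EReal.coe_add_sub_le_mul_add_mul {a b : ℝ} (hab : a + b = 1) (r s : ℝ) {c : EReal}
    (hc : c ≠ ⊥) :
    ((a * r + b * s : ℝ) : EReal) - c ≤ a * ((r : EReal) - c) + b * ((s : EReal) - c) := by
  induction c with
  | bot => exact absurd rfl hc
  | coe d =>
    simp only [← EReal.coe_sub, ← EReal.coe_mul, ← EReal.coe_add, EReal.coe_le_coe_iff]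
    linear_combination d * hab
  | top => simp

section ConvexFnEReal

variable {E : Type*}

lemma ConvexFnEReal.iSup [AddCommMonoid E] [SMul ℝ E] {ι : Sort*} {g : ι → E → EReal}
    (hg : ∀ i, ConvexFnEReal (g i)) : ConvexFnEReal fun x => ⨆ i, g i x := by
  intro x y a b ha hb hab
  refine iSup_le fun i => (hg i x y a b ha hb hab).trans (add_le_add ?_ ?_)
  · exact mul_le_mul_of_nonneg_left (le_iSup (g · x) i) (EReal.coe_nonneg.2 ha)
  · exact mul_le_mul_of_nonneg_left (le_iSup (g · y) i) (EReal.coe_nonneg.2 hb)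

lemma ConvexFnEReal.convex_epigraph [AddCommMonoid E] [Module ℝ E] {g : E → EReal}
    (hg : ConvexFnEReal g) : Convex ℝ {p : E × ℝ | g p.1 ≤ p.2} := by
  intro p hp q hq a b ha hb hab
  refine (hg p.1 q.1 a b ha hb hab).trans ?_
  have hcomb : (((a • p + b • q).2 : ℝ) : EReal) = a * (p.2 : EReal) + b * (q.2 : EReal) := by
    simp only [Prod.snd_add, Prod.smul_snd, smul_eq_mul, EReal.coe_add, EReal.coe_mul]
  rw [hcomb]
  exact add_le_add (mul_le_mul_of_nonneg_left hp (EReal.coe_nonneg.2 ha))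
    (mul_le_mul_of_nonneg_left hq (EReal.coe_nonneg.2 hb))

end ConvexFnEReal

lemma convexOnNonneg_toENNReal {ι : Type*} {F : (ι → ℝ) → EReal} (hF : ConvexFnEReal F)
    (hF0 : ∀ y, 0 ≤ F y) : ConvexOnNonneg fun y => (F y).toENNReal := by
  intro x y _ _ a b ha hb hab
  rw [← EReal.coe_ennreal_le_coe_ennreal_iff, EReal.coe_ennreal_add, EReal.coe_ennreal_mul,
    EReal.coe_ennreal_mul, EReal.coe_toENNReal (hF0 _), EReal.coe_toENNReal (hF0 _),
    EReal.coe_toENNReal (hF0 _), EReal.coe_ennreal_ofReal, EReal.coe_ennreal_ofReal,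
    max_eq_left ha, max_eq_left hb]
  exact hF x y a b ha hb hab

section Orthant

variable {Θ : Type*} [Fintype Θ] {g : (Θ → ℝ) → EReal}

lemma convexFnEReal_dotProduct_sub (y : Θ → ℝ) {c : EReal} (hc : c ≠ ⊥) :
    ConvexFnEReal fun x : Θ → ℝ => ((x ⬝ᵥ y : ℝ) : EReal) - c := by
  intro x x' a b _ _ hab
  simpa only [add_dotProduct, smul_dotProduct, smul_eq_mul] using
    EReal.coe_add_sub_le_mul_add_mul hab (x ⬝ᵥ y) (x' ⬝ᵥ y) hc

lemma continuous_dotProduct_sub (y : Θ → ℝ) (c : EReal) :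
    Continuous fun x : Θ → ℝ => ((x ⬝ᵥ y : ℝ) : EReal) - c :=
  continuous_iff_continuousAt.2 fun _ =>
    (EReal.continuousAt_add (Or.inl (EReal.coe_ne_top _)) (Or.inl (EReal.coe_ne_bot _))).comp
      ((continuous_coe_real_ereal.comp (continuous_id.dotProduct continuous_const)).prodMk
        continuous_const).continuousAt

lemma nonneg_of_forall_nonpos_dotProduct_le {z : Θ → ℝ} {v : ℝ}
    (h : ∀ w ≤ 0, z ⬝ᵥ w ≤ v) : 0 ≤ z := by
  classical
  intro θ
  by_contra! hθ
  obtain ⟨n, hn⟩ := exists_nat_gt (v / -z θ)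
  have := h (Pi.single θ (-n)) (Pi.single_nonpos.2 (by simp))
  rw [dotProduct_single] at this
  rw [div_lt_iff₀ (neg_pos.2 hθ)] at hn
  linarith

lemma le_conjOrthant (f : (Θ → ℝ) → ℝ≥0∞) (x : Θ → ℝ) {y : Θ → ℝ} (hy : 0 ≤ y) :
    ((x ⬝ᵥ y : ℝ) : EReal) - f y ≤ conjOrthant f x :=
  le_iSup (fun y : {y : Θ → ℝ // ∀ θ, 0 ≤ y θ} => ((x ⬝ᵥ y.1 : ℝ) : EReal) - f y.1) ⟨y, hy⟩

lemma convexFnEReal_conjOrthant (f : (Θ → ℝ) → ℝ≥0∞) : ConvexFnEReal (conjOrthant f) :=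
  ConvexFnEReal.iSup fun y => convexFnEReal_dotProduct_sub y.1 (EReal.coe_ennreal_ne_bot _)

lemma lowerSemicontinuous_conjOrthant (f : (Θ → ℝ) → ℝ≥0∞) :
    LowerSemicontinuous (conjOrthant f) :=
  lowerSemicontinuous_iSup fun y => (continuous_dotProduct_sub y.1 _).lowerSemicontinuous

lemma monotone_conjOrthant (f : (Θ → ℝ) → ℝ≥0∞) : Monotone (conjOrthant f) := fun _ _ h =>
  iSup_mono fun y => EReal.sub_le_sub
    (EReal.coe_le_coe_iff.2 (dotProduct_le_dotProduct_of_nonneg_right h y.2)) le_rfl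

lemma conjOrthant_zero {f : (Θ → ℝ) → ℝ≥0∞} (hf1 : f 1 = 0) : conjOrthant f 0 = 0 := by
  refine le_antisymm (iSup_le fun y => EReal.sub_nonpos.2 ?_) ?_
  · simpa using EReal.coe_ennreal_nonneg (f y.1)
  · simpa [hf1] using le_conjOrthant f 0 (zero_le_one (α := Θ → ℝ))

lemma sum_le_conjOrthant {f : (Θ → ℝ) → ℝ≥0∞} (hf1 : f 1 = 0) (x : Θ → ℝ) :
    ((∑ θ, x θ : ℝ) : EReal) ≤ conjOrthant f x := by
  simpa [hf1, dotProduct_one] using le_conjOrthant f x (zero_le_one (α := Θ → ℝ))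

noncomputable def fenchelConj (g : (Θ → ℝ) → EReal) (y : Θ → ℝ) : EReal :=
  ⨆ x, ((y ⬝ᵥ x : ℝ) : EReal) - g x

lemma fenchelConj_nonneg (h0 : g 0 ≤ 0) (y : Θ → ℝ) : 0 ≤ fenchelConj g y :=
  le_iSup_of_le 0 (by simpa using h0)

lemma convexFnEReal_fenchelConj (hg : ∀ x, g x ≠ ⊥) : ConvexFnEReal (fenchelConj g) :=
  ConvexFnEReal.iSup fun x => convexFnEReal_dotProduct_sub x (hg x)

lemma lowerSemicontinuous_fenchelConj : LowerSemicontinuous (fenchelConj g) :=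
  lowerSemicontinuous_iSup fun x => (continuous_dotProduct_sub x _).lowerSemicontinuous

lemma coe_dotProduct_sub_fenchelConj_le {x : Θ → ℝ} (hx : g x ≠ ⊥) (y : Θ → ℝ) :
    ((x ⬝ᵥ y : ℝ) : EReal) - fenchelConj g y ≤ g x := by
  by_cases hx' : g x = ⊤
  · exact hx' ▸ le_top
  refine EReal.sub_le_of_le_add' ((EReal.sub_le_iff_le_add (.inl hx) (.inl hx')).1 ?_)
  rw [dotProduct_comm]
  exact le_iSup (fun x => ((y ⬝ᵥ x : ℝ) : EReal) - g x) x

lemma fenchelConj_le_of_forall_le {z : Θ → ℝ} {v : ℝ}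
    (h : ∀ w, ((z ⬝ᵥ w - v : ℝ) : EReal) ≤ g w) : fenchelConj g z ≤ v := by
  refine iSup_le fun w => EReal.sub_le_of_le_add' ?_
  rw [← EReal.sub_le_iff_le_add (.inl (EReal.coe_ne_bot v)) (.inl (EReal.coe_ne_top v))]
  exact h w

lemma ConvexFnEReal.exists_dotProduct_separation (hconv : ConvexFnEReal g)
    (hlsc : LowerSemicontinuous g) {x : Θ → ℝ} {r : ℝ} (hr : (r : EReal) < g x) :
    ∃ (c : Θ → ℝ) (β u : ℝ), (∀ w (s : ℝ), g w ≤ s → c ⬝ᵥ w + β * s < u) ∧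
      u < c ⬝ᵥ x + β * r := by
  classical
  have hclosed : IsClosed {p : (Θ → ℝ) × ℝ | g p.1 ≤ p.2} :=
    hlsc.isClosed_epigraph.preimage
      (continuous_fst.prodMk (continuous_coe_real_ereal.comp continuous_snd))
  obtain ⟨L, u, hepi, hxr⟩ :=
    geometric_hahn_banach_closed_point hconv.convex_epigraph hclosed
      (x := (x, r)) (not_le.2 hr)
  set c : Θ → ℝ := fun i => L (fun j => if i = j then 1 else 0, 0)
  have hL : ∀ w s, L (w, s) = c ⬝ᵥ w + L (0, 1) * s := fun w s => by
    have hw : L (w, 0) = w ⬝ᵥ c :=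
      (L.comp (ContinuousLinearMap.inl ℝ _ ℝ)).toLinearMap.pi_apply_eq_sum_univ w
    have hs : L (0, s) = L (0, 1) * s := by
      rw [mul_comm, ← smul_eq_mul, ← map_smul, Prod.smul_mk, smul_zero, smul_eq_mul, mul_one]
    rw [← add_zero w, ← zero_add s, ← Prod.mk_add_mk, map_add, hw, hs, dotProduct_comm,
      add_zero, zero_add]
  exact ⟨c, L (0, 1), u, fun w s hws => hL w s ▸ hepi (w, s) hws, hL x r ▸ hxr⟩

lemma ConvexFnEReal.exists_affine_minorant_gt (hconv : ConvexFnEReal g)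
    (hlsc : LowerSemicontinuous g) {a : Θ → ℝ} {b : ℝ}
    (ha : ∀ w, ((a ⬝ᵥ w - b : ℝ) : EReal) ≤ g w) {x₀ : Θ → ℝ} {t₀ : ℝ} (hx₀ : g x₀ ≤ t₀)
    {x : Θ → ℝ} {r : ℝ} (hr : (r : EReal) < g x) :
    ∃ (z : Θ → ℝ) (v : ℝ), (∀ w, ((z ⬝ᵥ w - v : ℝ) : EReal) ≤ g w) ∧ r < z ⬝ᵥ x - v := by
  obtain ⟨c, β, u, hepi, hxr⟩ := hconv.exists_dotProduct_separation hlsc hr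
  have hβ : β ≤ 0 := by
    by_contra! hβ
    obtain ⟨n, hn⟩ := exists_nat_gt ((u - c ⬝ᵥ x₀ - β * t₀) / β)
    have := hepi x₀ (t₀ + n) (hx₀.trans (by exact_mod_cast le_add_of_nonneg_right n.cast_nonneg))
    rw [div_lt_iff₀ hβ] at hn
    nlinarith
  -- a possibly vertical hyperplane (`β = 0`) is tilted by the minorant `a ⬝ᵥ · - b`
  obtain ⟨lam, hlam, hsmall⟩ := exists_pos_mul_lt (sub_pos.2 hxr) (b + r - a ⬝ᵥ x)
  have hμ : 0 < lam - β := by linarith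
  refine ⟨(lam - β)⁻¹ • (c + lam • a), (lam - β)⁻¹ * (u + lam * b), fun w => ?_, ?_⟩
  · refine EReal.le_of_forall_lt_iff_le.1 fun s hs => EReal.coe_le_coe_iff.2 ?_
    have hc := hepi w s hs.le
    have ha' : a ⬝ᵥ w - b ≤ s := EReal.coe_le_coe_iff.1 ((ha w).trans hs.le)
    rw [smul_dotProduct, add_dotProduct, smul_dotProduct, smul_eq_mul, smul_eq_mul, ← mul_sub,
      inv_mul_le_iff₀ hμ]
    nlinarith
  · rw [smul_dotProduct, add_dotProduct, smul_dotProduct, smul_eq_mul, smul_eq_mul, ← mul_sub,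
      lt_inv_mul_iff₀ hμ]
    nlinarith

theorem conjOrthant_toENNReal_fenchelConj (hconv : ConvexFnEReal g)
    (hlsc : LowerSemicontinuous g) (hmono : Monotone g) (h0 : g 0 ≤ 0) {a : Θ → ℝ} {b : ℝ}
    (ha : ∀ w, ((a ⬝ᵥ w - b : ℝ) : EReal) ≤ g w) (x : Θ → ℝ) :
    conjOrthant (fun y => (fenchelConj g y).toENNReal) x = g x := by
  have hnonneg := fenchelConj_nonneg h0
  refine le_antisymm (iSup_le fun y => ?_) (le_of_forall_lt_imp_le_of_dense fun r hr => ?_)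
  · rw [EReal.coe_toENNReal (hnonneg _)]
    exact coe_dotProduct_sub_fenchelConj_le (ne_bot_of_le_ne_bot (EReal.coe_ne_bot _) (ha x)) y
  induction r with
  | bot => exact bot_le
  | top => exact absurd hr not_top_lt
  | coe r =>
    obtain ⟨z, v, hzv, hrzv⟩ := hconv.exists_affine_minorant_gt hlsc ha h0 hr
    have hz : 0 ≤ z := nonneg_of_forall_nonpos_dotProduct_le fun w hw => by
      have := (hzv w).trans ((hmono hw).trans h0)
      exact sub_nonpos.1 (EReal.coe_nonpos.1 this)
    calc (r : EReal) ≤ ((x ⬝ᵥ z : ℝ) : EReal) - v := by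
          rw [dotProduct_comm, ← EReal.coe_sub]; exact EReal.coe_le_coe_iff.2 hrzv.le
      _ ≤ ((x ⬝ᵥ z : ℝ) : EReal) - fenchelConj g z :=
          EReal.sub_le_sub le_rfl (fenchelConj_le_of_forall_le hzv)
      _ = ((x ⬝ᵥ z : ℝ) : EReal) - (fenchelConj g z).toENNReal := by
          rw [EReal.coe_toENNReal (hnonneg _)]
      _ ≤ _ := le_conjOrthant (fun y => (fenchelConj g y).toENNReal) x hz

end Orthant

/-- `g : ℝ^Θ → (−∞,∞]` is the Fenchel conjugate of some convex, lower semicontinuous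
`f : ℝ₊^Θ → [0,∞]` with `f(1,…,1) = 0` if and only if `g` is convex, lower semicontinuous,
monotone, vanishes at `0`, and the all-ones vector lies in the subdifferential of `g` at `0`
(i.e. `g(0) + ⟨𝟙, x⟩ ≤ g(x)` for all `x`). -/
theorem stmt8 {Θ : Type*} [Fintype Θ] (g : (Θ → ℝ) → EReal) :
    (∃ f : (Θ → ℝ) → ℝ≥0∞, ConvexOnNonneg f ∧
        LowerSemicontinuousOn f {x | ∀ θ, 0 ≤ x θ} ∧ f (fun _ => 1) = 0 ∧
        ∀ x, g x = conjOrthant f x)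
    ↔ (ConvexFnEReal g ∧ LowerSemicontinuous g ∧ Monotone g ∧ g 0 = 0 ∧
        ∀ x : Θ → ℝ, g 0 + ((∑ θ, x θ : ℝ) : EReal) ≤ g x) := by
  constructor
  · rintro ⟨f, -, -, hf1, hg⟩
    obtain rfl : g = conjOrthant f := funext hg
    refine ⟨convexFnEReal_conjOrthant f, lowerSemicontinuous_conjOrthant f,
      monotone_conjOrthant f, conjOrthant_zero hf1, fun x => ?_⟩
    rw [conjOrthant_zero hf1, zero_add]
    exact sum_le_conjOrthant hf1 x
  · rintro ⟨hconv, hlsc, hmono, h0, hsub⟩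
    have hone : ∀ w, ((1 ⬝ᵥ w - 0 : ℝ) : EReal) ≤ g w := fun w => by
      simpa [h0, one_dotProduct] using hsub w
    refine ⟨fun y => (fenchelConj g y).toENNReal,
      convexOnNonneg_toENNReal
        (convexFnEReal_fenchelConj fun w => ne_bot_of_le_ne_bot (EReal.coe_ne_bot _) (hone w))
        (fenchelConj_nonneg h0.le),
      (EReal.continuous_toENNReal.comp_lowerSemicontinuous lowerSemicontinuous_fenchelConj
        fun _ _ => EReal.toENNReal_le_toENNReal).lowerSemicontinuousOn _,
      EReal.toENNReal_of_nonpos (fenchelConj_le_of_forall_le hone),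
      fun x => (conjOrthant_toENNReal_fenchelConj hconv hlsc hmono h0.le hone x).symm⟩
end

section
/- Fix γ ∈ (0,1) and ψ: ℝ → ℝ strictly convex, continuously differentiable, strictly increasing with ψ'(ℝ) = (0,∞). For every w > 0 there exists a unique l_γ(w) ∈ (0, w) solving γψ'(w − l) + (1−γ)ψ'(−l) = ψ'(0), and the resulting response function ρ_γ(w) = γψ'(w − l_γ(w)) is strictly increasing and continuous in w, with ρ_γ(w) → γ as w → 0 and ρ_γ(w) → 1 as w → ∞. -/
/-!
Since `ψ'` is strictly increasing, the left-hand side of the balance equation is strictly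
decreasing in `l`; it exceeds `ψ'(0)` at `l = 0` and falls below it at `l = w`, which gives a
unique root `l_γ(w) ∈ (0, w)`. Substituting the equation back, `ρ_γ(w) = ψ'(0) - (1-γ)ψ'(-l_γ(w))`,
so `ρ_γ` increases whether `w - l_γ(w)` or `l_γ(w)` does. Moreover every `y ∈ (γψ'(0), ψ'(0))`
is attained: take `ψ'(a) = y/γ` and `ψ'(b) = (ψ'(0) - y)/(1-γ)`; then `l_γ(a - b) = -b`.
A strictly increasing function with open interval image is continuous, and its limits at the
ends of `(0, ∞)` are the ends of that interval.
-/

open Set Filter Topology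

section MonotoneOn

variable {α β : Type*} [LinearOrder α]

theorem StrictMonoOn.continuousOn_of_isOpen_image [TopologicalSpace α] [OrderTopology α]
    [LinearOrder β] [TopologicalSpace β] [OrderTopology β] [DenselyOrdered β] {f : α → β} {s : Set α} (hf : StrictMonoOn f s)
    (hs : IsOpen s) (himg : IsOpen (f '' s)) : ContinuousOn f s := fun _ ha =>
  (hf.continuousAt_of_image_mem_nhds (hs.mem_nhds ha)
    (himg.mem_nhds (mem_image_of_mem f ha))).continuousWithinAt

theorem MonotoneOn.tendsto_nhdsGT_of_image_eq_Ioo [TopologicalSpace α] [OrderTopology α]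
    [ConditionallyCompleteLinearOrder β] [TopologicalSpace β] [OrderTopology β] [DenselyOrdered β]
    {f : α → β} {a : α} {b c : β}
    (hf : MonotoneOn f (Ioi a)) (himg : f '' Ioi a = Ioo b c) (hbc : b < c) :
    Tendsto f (𝓝[>] a) (𝓝 b) := by
  simpa [himg, csInf_Ioo hbc] using hf.tendsto_nhdsGT (himg ▸ bddBelow_Ioo)

theorem MonotoneOn.tendsto_atTop_of_image_eq_Ioo [NoMaxOrder α] [LinearOrder β]
    [TopologicalSpace β] [OrderTopology β] [DenselyOrdered β] {f : α → β} {a : α} {b c : β}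
    (hf : MonotoneOn f (Ioi a)) (himg : f '' Ioi a = Ioo b c) (hbc : b < c) :
    Tendsto f atTop (𝓝 c) := by
  refine tendsto_order.2 ⟨fun y hy => ?_, fun y hy => ?_⟩
  · obtain ⟨z, hz⟩ := exists_between (max_lt hy hbc)
    obtain ⟨w₀, hw₀, hfw₀⟩ : z ∈ f '' Ioi a := himg ▸ ⟨(max_lt_iff.1 hz.1).2, hz.2⟩
    filter_upwards [eventually_ge_atTop w₀] with w hw
    exact (max_lt_iff.1 hz.1).1.trans_le (hfw₀ ▸ hf hw₀ (lt_of_lt_of_le hw₀ hw) hw)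
  · filter_upwards [eventually_gt_atTop a] with w hw
    exact (himg ▸ mem_image_of_mem f hw : f w ∈ Ioo b c).2.trans hy

end MonotoneOn

def balance (γ : ℝ) (ψd : ℝ → ℝ) (w l : ℝ) : ℝ :=
  γ * ψd (w - l) + (1 - γ) * ψd (-l)

section Balance

variable {γ : ℝ} {ψd : ℝ → ℝ}

theorem balance_strictAnti (hγ : γ ∈ Ioo 0 1) (hψd : StrictMono ψd) (w : ℝ) :
    StrictAnti (balance γ ψd w) := fun x y hxy => by
  have h₁ : ψd (w - y) < ψd (w - x) := hψd (by linarith)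
  have h₂ : ψd (-y) < ψd (-x) := hψd (by linarith)
  have := mul_lt_mul_of_pos_left h₁ hγ.1
  have := mul_lt_mul_of_pos_left h₂ (sub_pos.2 hγ.2)
  unfold balance
  linarith

theorem balance_self_lt (hγ : γ ∈ Ioo 0 1) (hψd : StrictMono ψd) {w : ℝ} (hw : 0 < w) :
    balance γ ψd w w < ψd 0 := by
  have := mul_lt_mul_of_pos_left (hψd (neg_neg_of_pos hw)) (sub_pos.2 hγ.2)
  simp only [balance, sub_self]
  linarith

theorem lt_balance_zero (hγ : γ ∈ Ioo 0 1) (hψd : StrictMono ψd) {w : ℝ} (hw : 0 < w) :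
    ψd 0 < balance γ ψd w 0 := by
  have := mul_lt_mul_of_pos_left (hψd hw) hγ.1
  simp only [balance, sub_zero, neg_zero]
  linarith

theorem exists_balance_eq (hγ : γ ∈ Ioo 0 1) (hψd : StrictMono ψd) (hcont : Continuous ψd)
    {w : ℝ} (hw : 0 < w) : ∃ l ∈ Ioo 0 w, balance γ ψd w l = ψd 0 :=
  intermediate_value_Ioo' hw.le (by unfold balance; fun_prop)
    ⟨balance_self_lt hγ hψd hw, lt_balance_zero hγ hψd hw⟩

theorem eq_of_balance_eq (hγ : γ ∈ Ioo 0 1) (hψd : StrictMono ψd) {w l l' : ℝ}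
    (hl : balance γ ψd w l = ψd 0) (hl' : balance γ ψd w l' = ψd 0) : l = l' :=
  (balance_strictAnti hγ hψd w).injective (hl.trans hl'.symm)

theorem mul_apply_sub_mem_Ioo_of_balance_eq (hγ : γ ∈ Ioo 0 1) (hψd : StrictMono ψd)
    (hpos : ∀ t, 0 < ψd t) {w l : ℝ} (hl : l ∈ Ioo 0 w) (hbal : balance γ ψd w l = ψd 0) :
    γ * ψd (w - l) ∈ Ioo (γ * ψd 0) (ψd 0) := by
  have := mul_pos (sub_pos.2 hγ.2) (hpos (-l))
  unfold balance at hbal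
  exact ⟨mul_lt_mul_of_pos_left (hψd (sub_pos.2 hl.2)) hγ.1, by linarith⟩

variable {l : ℝ → ℝ}

theorem strictMonoOn_response (hγ : γ ∈ Ioo 0 1) (hψd : StrictMono ψd)
    (hl : ∀ w, 0 < w → balance γ ψd w (l w) = ψd 0) :
    StrictMonoOn (fun w => γ * ψd (w - l w)) (Ioi 0) := by
  intro w₁ hw₁ w₂ hw₂ hw
  rcases le_or_gt (l w₂) (l w₁) with hle | hlt
  · exact mul_lt_mul_of_pos_left (hψd (by linarith)) hγ.1
  · -- by the balance equation, `γψ'(w - l w) = ψ'(0) - (1-γ)ψ'(-l w)`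
    have := mul_lt_mul_of_pos_left (hψd (neg_lt_neg hlt)) (sub_pos.2 hγ.2)
    have h₁ := hl w₁ hw₁
    have h₂ := hl w₂ hw₂
    unfold balance at h₁ h₂
    dsimp only
    linarith

theorem image_response (hγ : γ ∈ Ioo 0 1) (hψd : StrictMono ψd)
    (hrange : range ψd = Ioi 0) (hl : ∀ w, 0 < w → l w ∈ Ioo 0 w ∧ balance γ ψd w (l w) = ψd 0) :
    (fun w => γ * ψd (w - l w)) '' Ioi 0 = Ioo (γ * ψd 0) (ψd 0) := by
  have hpos (t : ℝ) : 0 < ψd t := (hrange ▸ mem_range_self t : ψd t ∈ Ioi 0)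
  refine Subset.antisymm (MapsTo.image_subset fun w hw =>
    mul_apply_sub_mem_Ioo_of_balance_eq hγ hψd hpos (hl w hw).1 (hl w hw).2) ?_
  rintro y ⟨hy₁, hy₂⟩
  have hγ₀ := hγ.1
  have hγ₁ := sub_pos.2 hγ.2
  obtain ⟨a, ha⟩ : y / γ ∈ range ψd := hrange ▸ div_pos ((mul_pos hγ₀ (hpos 0)).trans hy₁) hγ₀
  obtain ⟨b, hb⟩ : (ψd 0 - y) / (1 - γ) ∈ range ψd := hrange ▸ div_pos (sub_pos.2 hy₂) hγ₁
  have ha₀ : 0 < a := hψd.lt_iff_lt.1 <| ha ▸ (lt_div_iff₀ hγ₀).2 (by linarith)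
  have hb₀ : b < 0 := hψd.lt_iff_lt.1 <| hb ▸ (div_lt_iff₀ hγ₁).2 (by linarith)
  have hbal : balance γ ψd (a - b) (-b) = ψd 0 := by
    simp only [balance, sub_neg_eq_add, sub_add_cancel, neg_neg, ha, hb]
    field_simp
    ring
  refine ⟨a - b, sub_pos.2 (hb₀.trans ha₀), ?_⟩
  have hlab : l (a - b) = -b := eq_of_balance_eq hγ hψd (hl _ (by linarith)).2 hbal
  simp only [hlab, sub_neg_eq_add, sub_add_cancel, ha]
  field_simp

end Balance

theorem stmt16_general (γ : ℝ) (hγ : γ ∈ Set.Ioo (0 : ℝ) 1)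
    (ψd : ℝ → ℝ)
    (hcont : Continuous ψd)
    (hmono : StrictMono ψd) (hrange : Set.range ψd = Set.Ioi (0 : ℝ))
    (hψd0 : ψd 0 = 1) :
    ∃ l : ℝ → ℝ,
      (∀ w : ℝ, 0 < w →
        (0 < l w ∧ l w < w ∧ γ * ψd (w - l w) + (1 - γ) * ψd (-(l w)) = ψd 0)) ∧
      (∀ w : ℝ, 0 < w → ∀ l' : ℝ,
        γ * ψd (w - l') + (1 - γ) * ψd (-l') = ψd 0 → l' = l w) ∧
      StrictMonoOn (fun w => γ * ψd (w - l w)) (Set.Ioi 0) ∧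
      ContinuousOn (fun w => γ * ψd (w - l w)) (Set.Ioi 0) ∧
      Tendsto (fun w => γ * ψd (w - l w)) (nhdsWithin 0 (Set.Ioi 0)) (nhds γ) ∧
      Tendsto (fun w => γ * ψd (w - l w)) atTop (nhds 1) := by
  choose! l hl using fun w (hw : 0 < w) => exists_balance_eq hγ hmono hcont hw
  have himg := image_response hγ hmono hrange hl
  have hsm := strictMonoOn_response hγ hmono fun w hw => (hl w hw).2
  have hlt : γ * ψd 0 < ψd 0 := by
    rw [hψd0, mul_one]
    exact hγ.2
  refine ⟨l, fun w hw => ⟨(hl w hw).1.1, (hl w hw).1.2, (hl w hw).2⟩,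
    fun w hw l' h' => eq_of_balance_eq hγ hmono h' (hl w hw).2, hsm,
    hsm.continuousOn_of_isOpen_image isOpen_Ioi (himg ▸ isOpen_Ioo), ?_, ?_⟩
  · simpa [hψd0] using hsm.monotoneOn.tendsto_nhdsGT_of_image_eq_Ioo himg hlt
  · simpa [hψd0] using hsm.monotoneOn.tendsto_atTop_of_image_eq_Ioo himg hlt

/-- Fix `γ ∈ (0,1)` and `ψ : ℝ → ℝ` strictly convex, continuously differentiable, strictly
increasing with `ψ'(ℝ) = (0,∞)`, `ψ(0) = 0`, `ψ'(0) = 1`. For every `w > 0` there is a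
unique `l_γ(w) ∈ (0,w)` solving `γψ'(w−l) + (1−γ)ψ'(−l) = ψ'(0)`, and the response function
`ρ_γ(w) = γψ'(w − l_γ(w))` is strictly increasing and continuous on `(0,∞)`, tends to `γ`
as `w → 0⁺` and tends to `1` as `w → ∞`. -/
theorem stmt16 (γ : ℝ) (hγ : γ ∈ Set.Ioo (0 : ℝ) 1)
    (ψ ψd : ℝ → ℝ)
    (hderiv : ∀ t, HasDerivAt ψ (ψd t) t) (hcont : Continuous ψd)
    (hmono : StrictMono ψd) (hrange : Set.range ψd = Set.Ioi (0 : ℝ))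
    (hψ0 : ψ 0 = 0) (hψd0 : ψd 0 = 1) :
    ∃ l : ℝ → ℝ,
      (∀ w : ℝ, 0 < w →
        (0 < l w ∧ l w < w ∧ γ * ψd (w - l w) + (1 - γ) * ψd (-(l w)) = ψd 0)) ∧
      (∀ w : ℝ, 0 < w → ∀ l' : ℝ,
        γ * ψd (w - l') + (1 - γ) * ψd (-l') = ψd 0 → l' = l w) ∧
      StrictMonoOn (fun w => γ * ψd (w - l w)) (Set.Ioi 0) ∧
      ContinuousOn (fun w => γ * ψd (w - l w)) (Set.Ioi 0) ∧
      Tendsto (fun w => γ * ψd (w - l w)) (nhdsWithin 0 (Set.Ioi 0)) (nhds γ) ∧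
      Tendsto (fun w => γ * ψd (w - l w)) atTop (nhds 1) :=
  stmt16_general γ hγ ψd hcont hmono hrange hψd0
end

section
/- For the nested Shannon entropy with attribute set N, attribute prior ν ∈ Δ(N), conditionals μ_i ∈ Δ(Θ), and parameters ζ > 0, η_i > 0, the Fenchel conjugate is H*_NS(x) = ζ log( Σ_{i∈N} ν(i) ( Σ_{θ∈Θ} μ_i(θ) e^{x(θ)/η_i} )^{η_i/ζ} ) for all x ∈ ℝ^Θ; equivalently, the biconjugate of the nested-logit surplus function equals H_NS(p) = inf { ζ D_KL(r ∥ ν) + Σ_i r(i) η_i D_KL(q_i ∥ μ_i) } over r ∈ Δ(N) and kernels q ∈ Δ(Θ)^N with Σ_i r(i) q_i = p. -/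
open scoped ENNReal BigOperators

open Classical in
/-- Kullback–Leibler divergence on a finite set, with the conventions
`0 · log(0/0) = 0` and `t · log(t/0) = +∞` for `t > 0`. -/
noncomputable def KL {Ω : Type*} [Fintype Ω] (p q : Ω → ℝ) : ℝ≥0∞ :=
  if ∀ ω, q ω = 0 → p ω = 0 then
    ENNReal.ofReal (∑ ω, p ω * Real.log (p ω / q ω))
  else ⊤

/-- The nested Shannon entropy: the cheapest extension of the posterior `p` to
state–attribute pairs, with an across-attribute KL cost scaled by `ζ` and
within-attribute KL costs scaled by `η_i`. -/
noncomputable def HNS {Θ N : Type*} [Fintype Θ] [Fintype N]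
    (ν : N → ℝ) (μ : N → Θ → ℝ) (ζ : ℝ) (η : N → ℝ) (p : Θ → ℝ) : ℝ≥0∞ :=
  ⨅ rq : {rq : (N → ℝ) × (N → Θ → ℝ) //
      IsPMF rq.1 ∧ (∀ i, IsPMF (rq.2 i)) ∧ (∀ θ, ∑ i, rq.1 i * rq.2 i θ = p θ)},
    ENNReal.ofReal ζ * KL rq.1.1 ν
      + ∑ i, ENNReal.ofReal (rq.1.1 i * η i) * KL (rq.1.2 i) (μ i)


/-!
Both levels of nesting are instances of the Gibbs variational principle: for a probability
vector `m` and `η > 0`, `⟨x, q⟩ ≤ η KL(q ‖ m) + η log Σ m e^{x/η}`, the gap being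
`η KL(q ‖ m̃)` for the tilted distribution `m̃ ∝ m e^{x/η}`, so equality holds at `q = m̃`.
Write `p = Σ_i r_i q_i` and `y_i = η_i log Σ_θ μ_i(θ) e^{x(θ)/η_i}`. The principle inside
each nest bounds `⟨x, p⟩` by `Σ_i r_i (η_i KL(q_i ‖ μ_i) + y_i)`, and across nests it bounds
`Σ_i r_i y_i` by `ζ KL(r ‖ ν) + ζ log Σ_i ν_i e^{y_i/ζ}`, which is the claimed conjugate.
Tilting every distribution makes both steps equalities.
-/

open Real Finset

section Gibbs

variable {Ω : Type*} [Fintype Ω]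

theorem IsPMF.sum_mul_exp_pos {m : Ω → ℝ} (hm : IsPMF m) (f : Ω → ℝ) :
    0 < ∑ ω, m ω * exp (f ω) := by
  obtain ⟨ω, hω⟩ : ∃ ω, 0 < m ω := by
    by_contra! h
    have : ∑ ω, m ω = 0 := sum_eq_zero fun ω _ => le_antisymm (h ω) (hm.1 ω)
    simp [hm.2] at this
  exact sum_pos' (fun ω _ => mul_nonneg (hm.1 ω) (exp_pos _).le)
    ⟨ω, mem_univ _, mul_pos hω (exp_pos _)⟩

theorem sub_le_mul_log_div {q s : ℝ} (hq : 0 ≤ q) (hs : 0 ≤ s) (hqs : s = 0 → q = 0) :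
    q - s ≤ q * log (q / s) := by
  rcases hq.eq_or_lt with rfl | hq
  · simpa using hs
  have hs' : 0 < s := hs.lt_of_ne fun h => hq.ne' (hqs h.symm)
  have := mul_le_mul_of_nonneg_left (one_sub_inv_le_log_of_pos (div_pos hq hs')) hq.le
  rwa [inv_div, mul_sub, mul_one, mul_div_cancel₀ _ hq.ne'] at this

theorem sum_mul_log_div_nonneg {q s : Ω → ℝ} (hq : IsPMF q) (hs : IsPMF s)
    (hqs : ∀ ω, s ω = 0 → q ω = 0) : 0 ≤ ∑ ω, q ω * log (q ω / s ω) := by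
  calc (0 : ℝ) = ∑ ω, (q ω - s ω) := by rw [sum_sub_distrib, hq.2, hs.2, sub_self]
    _ ≤ _ := sum_le_sum fun ω _ => sub_le_mul_log_div (hq.1 ω) (hs.1 ω) (hqs ω)

/-- The conjugate `x ↦ η log Σ m e^{x/η}` of `η · KL(· ‖ m)`. -/
noncomputable def logSumExp (η : ℝ) (m x : Ω → ℝ) : ℝ :=
  η * log (∑ ω, m ω * exp (x ω / η))

noncomputable def tilted (η : ℝ) (m x : Ω → ℝ) : Ω → ℝ :=
  fun ω => m ω * exp (x ω / η) / ∑ ω', m ω' * exp (x ω' / η)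

variable {m : Ω → ℝ} (hm : IsPMF m) (η : ℝ) (x : Ω → ℝ)
include hm

theorem isPMF_tilted : IsPMF (tilted η m x) :=
  ⟨fun ω => div_nonneg (mul_nonneg (hm.1 ω) (exp_pos _).le) (hm.sum_mul_exp_pos _).le,
    by simp only [tilted]; rw [← sum_div, div_self (hm.sum_mul_exp_pos _).ne']⟩

theorem tilted_eq_zero_iff {ω : Ω} : tilted η m x ω = 0 ↔ m ω = 0 := by
  simp [tilted, (hm.sum_mul_exp_pos _).ne', exp_ne_zero]

theorem sum_mul_log_div_tilted {q : Ω → ℝ} (hq : IsPMF q) (hqm : ∀ ω, m ω = 0 → q ω = 0) :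
    ∑ ω, q ω * log (q ω / tilted η m x ω) = ∑ ω, q ω * log (q ω / m ω)
      - (∑ ω, x ω * q ω) / η + log (∑ ω, m ω * exp (x ω / η)) := by
  have hZ := hm.sum_mul_exp_pos fun ω => x ω / η
  have key : ∀ ω, q ω * log (q ω / tilted η m x ω) = q ω * log (q ω / m ω)
      - x ω * q ω / η + q ω * log (∑ ω, m ω * exp (x ω / η)) := by
    intro ω
    rcases (hq.1 ω).eq_or_lt with h | hqω
    · simp [← h]
    have hmω : 0 < m ω := (hm.1 ω).lt_of_ne fun h => hqω.ne' (hqm ω h.symm)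
    rw [tilted, div_div_eq_mul_div, mul_div_mul_comm, log_mul (by positivity) (by positivity),
      log_div hZ.ne' (exp_ne_zero _), log_div hqω.ne' hmω.ne', log_exp]
    ring
  rw [sum_congr rfl fun ω _ => key ω, sum_add_distrib, sum_sub_distrib, ← sum_mul, hq.2, one_mul,
    sum_div]

variable {η}

/-- The weight `c` may vanish, and then the right side is `0` even when `KL q m = ⊤`. -/
theorem ofReal_mul_sub_logSumExp_le (hη : 0 < η) {q : Ω → ℝ} (hq : IsPMF q) {c : ℝ}
    (hc : 0 ≤ c) :
    ENNReal.ofReal (c * (∑ ω, x ω * q ω - logSumExp η m x))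
      ≤ ENNReal.ofReal (c * η) * KL q m := by
  unfold KL
  split_ifs with hqm
  · have gibbs := sum_mul_log_div_nonneg hq (isPMF_tilted hm η x)
      fun ω h => hqm ω ((tilted_eq_zero_iff hm η x).1 h)
    rw [sum_mul_log_div_tilted hm η x hq hqm] at gibbs
    rw [← ENNReal.ofReal_mul (mul_nonneg hc hη.le), mul_assoc, logSumExp]
    refine ENNReal.ofReal_le_ofReal (mul_le_mul_of_nonneg_left ?_ hc)
    set K := ∑ ω, q ω * log (q ω / m ω)
    set L := log (∑ ω, m ω * exp (x ω / η))
    have := mul_le_mul_of_nonneg_left (show (∑ ω, x ω * q ω) / η - L ≤ K by linarith) hη.le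
    rwa [mul_sub, mul_div_cancel₀ _ hη.ne'] at this
  · rcases hc.eq_or_lt with rfl | hc
    · simp
    · rw [ENNReal.mul_top (ENNReal.ofReal_pos.2 (mul_pos hc hη)).ne']
      exact le_top

theorem mul_sum_mul_log_div_tilted (hη : η ≠ 0) :
    η * ∑ ω, tilted η m x ω * log (tilted η m x ω / m ω)
      = ∑ ω, x ω * tilted η m x ω - logSumExp η m x := by
  have h := sum_mul_log_div_tilted hm η x (isPMF_tilted hm η x)
    fun ω => (tilted_eq_zero_iff hm η x).2
  have hself : ∀ t : ℝ, t * log (t / t) = 0 := fun t => by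
    rcases eq_or_ne t 0 with rfl | ht <;> simp [*]
  simp only [hself, sum_const_zero] at h
  have := congrArg (η * ·) h
  simp only [mul_zero, mul_add, mul_sub, mul_div_cancel₀ _ hη] at this
  rw [logSumExp]
  linarith

theorem logSumExp_le_sum_mul_tilted (hη : 0 < η) :
    logSumExp η m x ≤ ∑ ω, x ω * tilted η m x ω := by
  have := mul_nonneg hη.le (sum_mul_log_div_nonneg (isPMF_tilted hm η x) hm
    fun ω => (tilted_eq_zero_iff hm η x).2)
  linarith [mul_sum_mul_log_div_tilted hm x hη.ne']

theorem ofReal_mul_KL_tilted (hη : 0 < η) {c : ℝ} (hc : 0 ≤ c) :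
    ENNReal.ofReal (c * η) * KL (tilted η m x) m
      = ENNReal.ofReal (c * (∑ ω, x ω * tilted η m x ω - logSumExp η m x)) := by
  rw [KL, if_pos fun ω => (tilted_eq_zero_iff hm η x).2, ← ENNReal.ofReal_mul (by positivity),
    mul_assoc, mul_sum_mul_log_div_tilted hm x hη.ne']

end Gibbs

theorem EReal.coe_sub_coe_ennreal_le {a c : ℝ} {K : ℝ≥0∞} (h : ENNReal.ofReal (a - c) ≤ K) :
    (a : EReal) - K ≤ c := by
  refine EReal.sub_le_of_le_add ?_
  calc (a : EReal) ≤ c + ((ENNReal.ofReal (a - c) : ℝ≥0∞) : EReal) := by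
        rw [EReal.coe_ennreal_ofReal]
        exact_mod_cast (by linarith [le_max_left (a - c) 0] : a ≤ c + max (a - c) 0)
    _ ≤ c + K := add_le_add le_rfl (EReal.coe_ennreal_le_coe_ennreal_iff.2 h)

theorem EReal.le_coe_sub_coe_ennreal {a c : ℝ} {K : ℝ≥0∞} (hca : c ≤ a)
    (h : K ≤ ENNReal.ofReal (a - c)) : (c : EReal) ≤ a - K := by
  calc (c : EReal) = a - ((ENNReal.ofReal (a - c) : ℝ≥0∞) : EReal) := by
        rw [EReal.coe_ennreal_ofReal, max_eq_left (_root_.sub_nonneg.2 hca)]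
        exact_mod_cast (sub_sub_cancel a c).symm
    _ ≤ a - K := EReal.sub_le_sub le_rfl (EReal.coe_ennreal_le_coe_ennreal_iff.2 h)

section NestedEntropy

variable {Θ N : Type*} [Fintype Θ] [Fintype N]

def mixture (r : N → ℝ) (q : N → Θ → ℝ) (θ : Θ) : ℝ :=
  ∑ i, r i * q i θ

theorem isPMF_mixture {r : N → ℝ} {q : N → Θ → ℝ} (hr : IsPMF r) (hq : ∀ i, IsPMF (q i)) :
    IsPMF (mixture r q) :=
  ⟨fun θ => sum_nonneg fun i _ => mul_nonneg (hr.1 i) ((hq i).1 θ), by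
    simp only [mixture]
    rw [sum_comm]
    simp_rw [← mul_sum, (hq _).2, mul_one]
    exact hr.2⟩

theorem sum_mul_mixture_sub_eq (x : Θ → ℝ) (r y : N → ℝ) (q : N → Θ → ℝ) (c : ℝ) :
    ∑ θ, x θ * mixture r q θ - c
      = (∑ i, y i * r i - c) + ∑ i, r i * (∑ θ, x θ * q i θ - y i) := by
  have hswap : ∑ θ, x θ * mixture r q θ = ∑ i, r i * ∑ θ, x θ * q i θ := by
    simp_rw [mixture, mul_sum]
    rw [sum_comm]
    exact sum_congr rfl fun i _ => sum_congr rfl fun θ _ => by ring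
  simp only [hswap, mul_sub, sum_sub_distrib, mul_comm (y _)]
  ring

/-- The inclusive value `y_i` of nest `i`. -/
noncomputable def inclusiveValue (μ : N → Θ → ℝ) (η : N → ℝ) (x : Θ → ℝ) (i : N) : ℝ :=
  logSumExp (η i) (μ i) x

noncomputable def nestedCost (ν : N → ℝ) (μ : N → Θ → ℝ) (ζ : ℝ) (η : N → ℝ) (r : N → ℝ)
    (q : N → Θ → ℝ) : ℝ≥0∞ :=
  ENNReal.ofReal ζ * KL r ν + ∑ i, ENNReal.ofReal (r i * η i) * KL (q i) (μ i)

variable {ν : N → ℝ} {μ : N → Θ → ℝ} {ζ : ℝ} {η : N → ℝ}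
  (hν : IsPMF ν) (hμ : ∀ i, IsPMF (μ i)) (hζ : 0 < ζ) (hη : ∀ i, 0 < η i) (x : Θ → ℝ)
include hν hμ hζ hη

theorem ofReal_sub_logSumExp_le_nestedCost {r : N → ℝ} {q : N → Θ → ℝ} (hr : IsPMF r)
    (hq : ∀ i, IsPMF (q i)) :
    ENNReal.ofReal (∑ θ, x θ * mixture r q θ - logSumExp ζ ν (inclusiveValue μ η x))
      ≤ nestedCost ν μ ζ η r q := by
  rw [sum_mul_mixture_sub_eq x r (inclusiveValue μ η x)]
  refine ENNReal.ofReal_add_le.trans (add_le_add ?_ ?_)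
  · simpa using ofReal_mul_sub_logSumExp_le hν _ hζ hr zero_le_one
  · exact (le_sum_of_subadditive _ ENNReal.ofReal_zero.le (fun _ _ => ENNReal.ofReal_add_le) _
      _).trans
      (sum_le_sum fun i _ => ofReal_mul_sub_logSumExp_le (hμ i) x (hη i) (hq i) (hr.1 i))

theorem logSumExp_le_sum_mul_mixture_tilted :
    logSumExp ζ ν (inclusiveValue μ η x) ≤ ∑ θ, x θ *
      mixture (tilted ζ ν (inclusiveValue μ η x)) (fun i => tilted (η i) (μ i) x) θ := by
  rw [← sub_nonneg, sum_mul_mixture_sub_eq x _ (inclusiveValue μ η x)]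
  exact add_nonneg (sub_nonneg.2 (logSumExp_le_sum_mul_tilted hν _ hζ)) <| sum_nonneg fun i _ =>
    mul_nonneg ((isPMF_tilted hν ζ _).1 i)
      (sub_nonneg.2 (logSumExp_le_sum_mul_tilted (hμ i) x (hη i)))

theorem nestedCost_tilted :
    nestedCost ν μ ζ η (tilted ζ ν (inclusiveValue μ η x))
        (fun i => tilted (η i) (μ i) x)
      = ENNReal.ofReal (∑ θ, x θ * mixture (tilted ζ ν (inclusiveValue μ η x))
          (fun i => tilted (η i) (μ i) x) θ - logSumExp ζ ν (inclusiveValue μ η x)) := by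
  have hr := isPMF_tilted hν ζ (inclusiveValue μ η x)
  have hterm : ∀ i, 0 ≤ tilted ζ ν (inclusiveValue μ η x) i
      * (∑ θ, x θ * tilted (η i) (μ i) x θ - inclusiveValue μ η x i) := fun i =>
    mul_nonneg (hr.1 i) (sub_nonneg.2 (logSumExp_le_sum_mul_tilted (hμ i) x (hη i)))
  rw [sum_mul_mixture_sub_eq x _ (inclusiveValue μ η x),
    ENNReal.ofReal_add (sub_nonneg.2 (logSumExp_le_sum_mul_tilted hν _ hζ))
      (sum_nonneg fun i _ => hterm i), ENNReal.ofReal_sum_of_nonneg fun i _ => hterm i, nestedCost]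
  congr 1
  · simpa using ofReal_mul_KL_tilted hν (inclusiveValue μ η x) hζ zero_le_one
  · exact sum_congr rfl fun i _ => ofReal_mul_KL_tilted (hμ i) x (hη i) (hr.1 i)

end NestedEntropy

theorem stmt17_general {Θ N : Type*} [Fintype Θ] [Fintype N]
    (ν : N → ℝ) (μ : N → Θ → ℝ) (ζ : ℝ) (η : N → ℝ)
    (hν : IsPMF ν) (hμ : ∀ i, IsPMF (μ i))
    (hζ : 0 < ζ) (hη : ∀ i, 0 < η i) (x : Θ → ℝ) :
    (⨆ p : {p : Θ → ℝ // IsPMF p},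
        ((∑ θ, x θ * p.1 θ : ℝ) : EReal) - ((HNS ν μ ζ η p.1 : ℝ≥0∞) : EReal))
      = ((ζ * Real.log (∑ i, ν i *
            (∑ θ, μ i θ * Real.exp (x θ / η i)) ^ (η i / ζ)) : ℝ) : EReal) := by
  have hrhs : ζ * log (∑ i, ν i * (∑ θ, μ i θ * exp (x θ / η i)) ^ (η i / ζ))
      = logSumExp ζ ν (inclusiveValue μ η x) := by
    refine congrArg (ζ * log ·) (sum_congr rfl fun i _ => ?_)
    simp only [inclusiveValue, logSumExp]
    rw [rpow_def_of_pos ((hμ i).sum_mul_exp_pos _), mul_comm (log _), div_mul_eq_mul_div]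
  rw [hrhs]
  refine le_antisymm (iSup_le fun ⟨p, _⟩ => EReal.coe_sub_coe_ennreal_le (le_iInf ?_)) ?_
  · rintro ⟨⟨r, q⟩, hr, hq, hmix⟩
    obtain rfl : p = mixture r q := funext fun θ => (hmix θ).symm
    exact ofReal_sub_logSumExp_le_nestedCost hν hμ hζ hη x hr hq
  · have hr := isPMF_tilted hν ζ (inclusiveValue μ η x)
    have hq i := isPMF_tilted (hμ i) (η i) x
    refine le_iSup_of_le ⟨_, isPMF_mixture hr hq⟩ (EReal.le_coe_sub_coe_ennreal
      (logSumExp_le_sum_mul_mixture_tilted hν hμ hζ hη x) ?_)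
    rw [← nestedCost_tilted hν hμ hζ hη x]
    exact iInf_le_of_le ⟨(_, _), hr, hq, fun θ => rfl⟩ le_rfl

/-- The Fenchel conjugate of the nested Shannon entropy is the generalized nested-logit
surplus function:
`H*_NS(x) = ζ log( Σ_i ν(i) ( Σ_θ μ_i(θ) e^{x(θ)/η_i} )^{η_i/ζ} )`. -/
theorem stmt17 {Θ N : Type*} [Fintype Θ] [Fintype N] [Nonempty Θ] [Nonempty N]
    (ν : N → ℝ) (μ : N → Θ → ℝ) (ζ : ℝ) (η : N → ℝ)
    (hν : IsPMF ν) (hνpos : ∀ i, 0 < ν i) (hμ : ∀ i, IsPMF (μ i))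
    (hζ : 0 < ζ) (hη : ∀ i, 0 < η i) (x : Θ → ℝ) :
    (⨆ p : {p : Θ → ℝ // IsPMF p},
        ((∑ θ, x θ * p.1 θ : ℝ) : EReal) - ((HNS ν μ ζ η p.1 : ℝ≥0∞) : EReal))
      = ((ζ * Real.log (∑ i, ν i *
            (∑ θ, μ i θ * Real.exp (x θ / η i)) ^ (η i / ζ)) : ℝ) : EReal) :=
  stmt17_general ν μ ζ η hν hμ hζ hη x
end

section
/- (Chain rule consequence) For deterministic categorization by a partition {B_i}_{i∈N} of Θ, the infimum defining the nested Shannon entropy H_NS(p) = inf{ ζ D_KL(r ∥ ν) + Σ_i r(i) η_i D_KL(q_i ∥ μ_i) : Σ_i r(i)q_i = p } is attained at r(i) = p(B_i) and q_i = p(·|B_i), where ν(i) = π(B_i) and μ_i = π(·|B_i). In particular, when all η_i = ζ, H_NS(p) = ζ D_KL(p ∥ π). -/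
open scoped ENNReal BigOperators

open Classical in
lemma KL_of_ac {Ω : Type*} [Fintype Ω] (p q : Ω → ℝ) (h : ∀ ω, q ω = 0 → p ω = 0) :
    KL p q = ENNReal.ofReal (∑ ω, p ω * Real.log (p ω / q ω)) := by
  rw [KL, if_pos h]

open Classical in
lemma KL_of_top {Ω : Type*} [Fintype Ω] (p q : Ω → ℝ) (h : ¬ ∀ ω, q ω = 0 → p ω = 0) :
    KL p q = ⊤ := by
  rw [KL, if_neg h]

lemma gibbs {Ω : Type*} [Fintype Ω] (p q : Ω → ℝ) (hp : IsPMF p) (hq : IsPMF q)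
    (h : ∀ ω, q ω = 0 → p ω = 0) : 0 ≤ ∑ ω, p ω * Real.log (p ω / q ω) := by
  have key : ∀ ω, p ω * Real.log (q ω / p ω) ≤ q ω - p ω := by
    intro ω
    rcases eq_or_lt_of_le (hp.1 ω) with h0 | hpos
    · simp [← h0, hq.1 ω]
    · have hq0 : 0 < q ω := by
        rcases eq_or_lt_of_le (hq.1 ω) with h0 | h1
        · exact absurd (h ω h0.symm) (by linarith)
        · exact h1
      have := Real.log_le_sub_one_of_pos (div_pos hq0 hpos)
      have h2 := mul_le_mul_of_nonneg_left this (le_of_lt hpos)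
      calc p ω * Real.log (q ω / p ω) ≤ p ω * (q ω / p ω - 1) := h2
        _ = q ω - p ω := by field_simp
  have hle : ∑ ω, p ω * Real.log (q ω / p ω) ≤ 0 := by
    calc ∑ ω, p ω * Real.log (q ω / p ω) ≤ ∑ ω, (q ω - p ω) :=
          Finset.sum_le_sum (fun ω _ => key ω)
      _ = 0 := by rw [Finset.sum_sub_distrib, hp.2, hq.2]; ring
  have heq : ∀ ω, p ω * Real.log (p ω / q ω) = -(p ω * Real.log (q ω / p ω)) := by
    intro ω
    have hinv : p ω / q ω = (q ω / p ω)⁻¹ := by rw [inv_div]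
    rw [hinv, Real.log_inv]; ring
  rw [Finset.sum_congr rfl (fun ω _ => heq ω), Finset.sum_neg_distrib]
  linarith

lemma sum_partition {Θ N : Type*} [Fintype Θ] [Fintype N] [DecidableEq Θ]
    (B : N → Finset Θ) (hdisj : ∀ i j, i ≠ j → Disjoint (B i) (B j))
    (hcover : ∀ θ, ∃ i, θ ∈ B i) (f : Θ → ℝ) :
    ∑ i, ∑ θ ∈ B i, f θ = ∑ θ, f θ := by
  rw [← Finset.sum_biUnion (fun i _ j _ hij => hdisj i j hij)]
  apply Finset.sum_congr _ (fun _ _ => rfl)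
  ext θ; simp [hcover θ]

/-- Deterministic categorization by a partition `{B_i}` of `Θ`: the infimum defining the
nested Shannon entropy is attained at `r(i) = p(B_i)`, `q_i = p(·|B_i)` (with `q_i` taken
to be `μ_i` when `p(B_i) = 0`), where `ν(i) = π(B_i)` and `μ_i = π(·|B_i)`. In particular,
when all `η_i = ζ`, the nested Shannon entropy equals `ζ · D_KL(p ∥ π)`. -/
theorem stmt18 {Θ N : Type*} [Fintype Θ] [Fintype N] [DecidableEq Θ]
    (B : N → Finset Θ)
    (hdisj : ∀ i j, i ≠ j → Disjoint (B i) (B j))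
    (hcover : ∀ θ, ∃ i, θ ∈ B i) (hne : ∀ i, (B i).Nonempty)
    (π : Θ → ℝ) (hπ : IsPMF π) (hπpos : ∀ θ, 0 < π θ)
    (ζ : ℝ) (η : N → ℝ) (hζ : 0 < ζ) (hη : ∀ i, 0 < η i)
    (p : Θ → ℝ) (hp : IsPMF p) :
    let ν : N → ℝ := fun i => ∑ θ ∈ B i, π θ
    let μ : N → Θ → ℝ := fun i θ => if θ ∈ B i then π θ / ν i else 0
    let r : N → ℝ := fun i => ∑ θ ∈ B i, p θ
    let q : N → Θ → ℝ := fun i θ =>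
      if r i = 0 then μ i θ else if θ ∈ B i then p θ / r i else 0
    let Obj : (N → ℝ) → (N → Θ → ℝ) → ℝ≥0∞ := fun r' q' =>
      ENNReal.ofReal ζ * KL r' ν + ∑ i, ENNReal.ofReal (r' i * η i) * KL (q' i) (μ i)
    (IsPMF r ∧ (∀ i, IsPMF (q i)) ∧ (∀ θ, ∑ i, r i * q i θ = p θ)) ∧
    (∀ r' : N → ℝ, ∀ q' : N → Θ → ℝ, IsPMF r' → (∀ i, IsPMF (q' i)) →
      (∀ θ, ∑ i, r' i * q' i θ = p θ) → Obj r q ≤ Obj r' q') ∧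
    ((∀ i, η i = ζ) → Obj r q = ENNReal.ofReal ζ * KL p π) := by
  intro ν μ r q Obj
  -- basic facts
  have huniq : ∀ {θ : Θ} {i j : N}, θ ∈ B i → θ ∈ B j → i = j := by
    intro θ i j hi hj
    by_contra hij
    exact (Finset.disjoint_left.mp (hdisj i j hij)) hi hj
  have hνpos : ∀ i, 0 < ν i :=
    fun i => Finset.sum_pos (fun θ _ => hπpos θ) (hne i)
  have hrnn : ∀ i, 0 ≤ r i :=
    fun i => Finset.sum_nonneg (fun θ _ => hp.1 θ)
  have hrzero : ∀ i, r i = 0 → ∀ θ ∈ B i, p θ = 0 := by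
    intro i hri θ hθ
    exact (Finset.sum_eq_zero_iff_of_nonneg (fun θ _ => hp.1 θ)).mp hri θ hθ
  have hμ_eq : ∀ i θ, θ ∈ B i → μ i θ = π θ / ν i := by
    intro i θ hθ; simp only [μ, if_pos hθ]
  have hμ_zero : ∀ i θ, θ ∉ B i → μ i θ = 0 := by
    intro i θ hθ; simp only [μ, if_neg hθ]
  have hμpmf : ∀ i, IsPMF (μ i) := by
    intro i
    constructor
    · intro θ
      by_cases hθ : θ ∈ B i
      · rw [hμ_eq i θ hθ]; exact div_nonneg (hπ.1 θ) (hνpos i).le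
      · rw [hμ_zero i θ hθ]
    · have : ∑ θ, μ i θ = ∑ θ ∈ B i, π θ / ν i := by
        rw [← Finset.sum_subset (Finset.subset_univ (B i))
          (fun θ _ hθ => hμ_zero i θ hθ)]
        exact Finset.sum_congr rfl (fun θ hθ => hμ_eq i θ hθ)
      rw [this, ← Finset.sum_div]
      exact div_self (hνpos i).ne'
  have hrpmf : IsPMF r := by
    refine ⟨hrnn, ?_⟩
    rw [show (∑ i, r i) = ∑ i, ∑ θ ∈ B i, p θ from rfl,
      sum_partition B hdisj hcover, hp.2]
  have hνpmf : IsPMF ν := by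
    refine ⟨fun i => (hνpos i).le, ?_⟩
    rw [show (∑ i, ν i) = ∑ i, ∑ θ ∈ B i, π θ from rfl,
      sum_partition B hdisj hcover, hπ.2]
  have hq_zero : ∀ i θ, θ ∉ B i → q i θ = 0 := by
    intro i θ hθ
    by_cases hri : r i = 0
    · simp only [q, if_pos hri]; exact hμ_zero i θ hθ
    · simp only [q, if_neg hri, if_neg hθ]
  have hq_eq : ∀ i, r i ≠ 0 → ∀ θ ∈ B i, q i θ = p θ / r i := by
    intro i hri θ hθ; simp only [q, if_neg hri, if_pos hθ]
  have hqpmf : ∀ i, IsPMF (q i) := by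
    intro i
    by_cases hri : r i = 0
    · have : q i = μ i := by funext θ; simp only [q, if_pos hri]
      rw [this]; exact hμpmf i
    · constructor
      · intro θ
        by_cases hθ : θ ∈ B i
        · rw [hq_eq i hri θ hθ]
          exact div_nonneg (hp.1 θ) (hrnn i)
        · rw [hq_zero i θ hθ]
      · have : ∑ θ, q i θ = ∑ θ ∈ B i, p θ / r i := by
          rw [← Finset.sum_subset (Finset.subset_univ (B i))
            (fun θ _ hθ => hq_zero i θ hθ)]
          exact Finset.sum_congr rfl (fun θ hθ => hq_eq i hri θ hθ)
        rw [this, ← Finset.sum_div]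
        exact div_self hri
  have hmix : ∀ θ, ∑ i, r i * q i θ = p θ := by
    intro θ
    obtain ⟨i₀, hi₀⟩ := hcover θ
    rw [Finset.sum_eq_single i₀
      (fun j _ hj => by
        rw [hq_zero j θ (fun hθ => hj (huniq hθ hi₀)), mul_zero])
      (fun h => absurd (Finset.mem_univ i₀) h)]
    by_cases hri : r i₀ = 0
    · rw [hri, zero_mul]
      exact (hrzero i₀ hri θ hi₀).symm
    · rw [hq_eq i₀ hri θ hi₀, mul_div_cancel₀ _ hri]
  refine ⟨⟨hrpmf, hqpmf, hmix⟩, ?_, ?_⟩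
  · -- optimality
    intro r' q' hr' hq' hmix'
    by_cases hcase : ∀ i, r' i = 0 ∨ ∀ θ, θ ∉ B i → q' i θ = 0
    · -- feasible and finite: then r' = r, q' = q on the support
      have hpoint : ∀ i, ∀ θ ∈ B i, p θ = r' i * q' i θ := by
        intro i θ hθ
        rw [← hmix' θ]
        rw [Finset.sum_eq_single i
          (fun j _ hj => ?_)
          (fun h => absurd (Finset.mem_univ i) h)]
        rcases hcase j with h0 | hsupp
        · rw [h0, zero_mul]
        · rw [hsupp θ (fun hθ' => hj (huniq hθ' hθ)), mul_zero]
      have hr'eq : r' = r := by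
        funext i
        rcases hcase i with h0 | hsupp
        · have : r i = 0 := by
            rw [show r i = ∑ θ ∈ B i, p θ from rfl]
            apply Finset.sum_eq_zero
            intro θ hθ; rw [hpoint i θ hθ, h0, zero_mul]
          rw [h0, this]
        · have hq'sum : ∑ θ ∈ B i, q' i θ = 1 := by
            rw [Finset.sum_subset (Finset.subset_univ (B i))
              (fun θ _ hθ => hsupp θ hθ)]
            exact (hq' i).2
          have : r i = r' i * 1 := by
            rw [← hq'sum, Finset.mul_sum]
            exact Finset.sum_congr rfl (fun θ hθ => hpoint i θ hθ)
          rw [this, mul_one]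
      have hq'eq : ∀ i, r i ≠ 0 → q' i = q i := by
        intro i hri
        have hr'i : r' i = r i := by rw [hr'eq]
        funext θ
        by_cases hθ : θ ∈ B i
        · rw [hq_eq i hri θ hθ, eq_div_iff hri, mul_comm]
          rw [← hr'i]
          exact (hpoint i θ hθ).symm
        · rcases hcase i with h0 | hsupp
          · exact absurd (hr'i ▸ h0) hri
          · rw [hsupp θ hθ, hq_zero i θ hθ]
      have : Obj r' q' = Obj r q := by
        simp only [Obj, hr'eq]
        congr 1
        apply Finset.sum_congr rfl
        intro i _
        by_cases hri : r i = 0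
        · rw [hri]; simp
        · rw [hq'eq i hri]
      rw [this]
    · -- infinite objective
      push_neg at hcase
      obtain ⟨i, hri, θ, hθ, hqθ⟩ := hcase
      have hKL : KL (q' i) (μ i) = ⊤ := by
        apply KL_of_top
        push_neg
        exact ⟨θ, hμ_zero i θ hθ, hqθ⟩
      have hcoef : ENNReal.ofReal (r' i * η i) ≠ 0 := by
        simp only [ne_eq, ENNReal.ofReal_eq_zero, not_le]
        exact mul_pos (lt_of_le_of_ne (hr'.1 i) (Ne.symm hri)) (hη i)
      have hterm : ENNReal.ofReal (r' i * η i) * KL (q' i) (μ i) = ⊤ := by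
        rw [hKL, ENNReal.mul_top hcoef]
      have : Obj r' q' = ⊤ := by
        simp only [Obj]
        rw [ENNReal.sum_eq_top.mpr ⟨i, Finset.mem_univ i, hterm⟩, add_top]
      rw [this]; exact le_top
  · -- chain rule value
    intro hηζ
    have hac1 : ∀ i, ν i = 0 → r i = 0 := fun i h => absurd h (hνpos i).ne'
    have hac2 : ∀ i, ∀ θ, μ i θ = 0 → q i θ = 0 := by
      intro i θ h
      by_cases hθ : θ ∈ B i
      · rw [hμ_eq i θ hθ] at h
        exact absurd h (div_pos (hπpos θ) (hνpos i)).ne'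
      · exact hq_zero i θ hθ
    have hac3 : ∀ θ, π θ = 0 → p θ = 0 := fun θ h => absurd h (hπpos θ).ne'
    set A := ∑ i, r i * Real.log (r i / ν i) with hA
    set S : N → ℝ := fun i => ∑ θ, q i θ * Real.log (q i θ / μ i θ) with hS
    set T := ∑ θ, p θ * Real.log (p θ / π θ) with hT
    have hAnn : 0 ≤ A := gibbs r ν hrpmf hνpmf hac1
    have hSnn : ∀ i, 0 ≤ S i := fun i => gibbs (q i) (μ i) (hqpmf i) (hμpmf i) (hac2 i)
    have hkey : A + ∑ i, r i * S i = T := by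
      have hSres : ∀ i, S i = ∑ θ ∈ B i, q i θ * Real.log (q i θ / μ i θ) :=
        fun i => (Finset.sum_subset (f := fun θ => q i θ * Real.log (q i θ / μ i θ))
          (Finset.subset_univ (B i))
          (fun θ _ hθ => by simp only [hq_zero i θ hθ, zero_mul])).symm
      have hTres : T = ∑ i, ∑ θ ∈ B i, p θ * Real.log (p θ / π θ) := by
        rw [hT, sum_partition B hdisj hcover]
      rw [hTres, hA, ← Finset.sum_add_distrib]
      apply Finset.sum_congr rfl
      intro i _
      by_cases hri : r i = 0
      · rw [hri, zero_mul, zero_mul, add_zero]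
        symm
        apply Finset.sum_eq_zero
        intro θ hθ
        rw [hrzero i hri θ hθ, zero_mul]
      · have hripos : 0 < r i := lt_of_le_of_ne (hrnn i) (Ne.symm hri)
        rw [hSres i, Finset.mul_sum]
        have h1 : r i * Real.log (r i / ν i)
            = ∑ θ ∈ B i, p θ * Real.log (r i / ν i) := by
          rw [← Finset.sum_mul]
        rw [h1, ← Finset.sum_add_distrib]
        apply Finset.sum_congr rfl
        intro θ hθ
        rw [hq_eq i hri θ hθ, hμ_eq i θ hθ]
        rcases eq_or_lt_of_le (hp.1 θ) with h0 | hppos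
        · rw [← h0]; simp
        · have : r i * (p θ / r i * Real.log (p θ / r i / (π θ / ν i)))
              = p θ * Real.log (p θ / r i / (π θ / ν i)) := by
            field_simp
          rw [this, ← mul_add]
          congr 1
          rw [← Real.log_mul (div_pos hripos (hνpos i)).ne'
            (div_pos (div_pos hppos hripos) (div_pos (hπpos θ) (hνpos i))).ne']
          congr 1
          have hri' : r i ≠ 0 := hri
          have hν' : ν i ≠ 0 := (hνpos i).ne'
          have hπ' : π θ ≠ 0 := (hπpos θ).ne'
          field_simp
    have hKLr : KL r ν = ENNReal.ofReal A := KL_of_ac r ν hac1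
    have hKLp : KL p π = ENNReal.ofReal T := KL_of_ac p π hac3
    have hsum : ∀ i, ENNReal.ofReal (r i * η i) * KL (q i) (μ i)
        = ENNReal.ofReal (ζ * (r i * S i)) := by
      intro i
      have hKLq : KL (q i) (μ i) = ENNReal.ofReal (S i) := KL_of_ac (q i) (μ i) (hac2 i)
      rw [hKLq, hηζ i, ← ENNReal.ofReal_mul (mul_nonneg (hrnn i) hζ.le)]
      congr 1
      ring
    have hObj : Obj r q = ENNReal.ofReal (ζ * (A + ∑ i, r i * S i)) := by
      simp only [Obj]
      rw [hKLr, Finset.sum_congr rfl (fun i _ => hsum i),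
        ← ENNReal.ofReal_sum_of_nonneg
          (fun i _ => mul_nonneg hζ.le (mul_nonneg (hrnn i) (hSnn i))),
        ← ENNReal.ofReal_mul hζ.le,
        ← ENNReal.ofReal_add (mul_nonneg hζ.le hAnn)
          (Finset.sum_nonneg (fun i _ => mul_nonneg hζ.le (mul_nonneg (hrnn i) (hSnn i))))]
      congr 1
      rw [mul_add, Finset.mul_sum, Finset.mul_sum]
    rw [hObj, hkey, hKLp, ENNReal.ofReal_mul hζ.le]
end

section
/- Let H*(x) = c + ζ log( Σ_{i∈N} ( Σ_{θ∈i} e^{x(θ)/η} )^{η/ζ} ) where N = {U,D,L,R} are four two-element subsets of a four-element state space Θ covering each state exactly twice (the 2×2 nest structure). Then H* is strictly convex modulo translations: for all t ∈ (0,1) and x,y ∈ ℝ^Θ with x − y not a constant vector, H*(tx + (1−t)y) < t H*(x) + (1−t) H*(y). -/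
noncomputable def Hstar22 (ζ η c : ℝ) (x : Bool × Bool → ℝ) : ℝ :=
  c + ζ * Real.log (
      (Real.exp (x (true, true) / η) + Real.exp (x (true, false) / η)) ^ (η / ζ)
    + (Real.exp (x (false, true) / η) + Real.exp (x (false, false) / η)) ^ (η / ζ)
    + (Real.exp (x (true, true) / η) + Real.exp (x (false, true) / η)) ^ (η / ζ)
    + (Real.exp (x (true, false) / η) + Real.exp (x (false, false) / η)) ^ (η / ζ))

lemma amgm_lt {a b t : ℝ} (ha : 0 < a) (hb : 0 < b) (hab : a ≠ b)
    (ht0 : 0 < t) (ht1 : t < 1) : a ^ t * b ^ (1 - t) < t * a + (1 - t) * b := by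
  have hlog : Real.log a ≠ Real.log b := fun h => hab (by
    rw [← Real.exp_log ha, ← Real.exp_log hb, h])
  have h := strictConvexOn_exp.2 (Set.mem_univ (Real.log a)) (Set.mem_univ (Real.log b))
    hlog ht0 (by linarith : (0:ℝ) < 1 - t) (by ring : t + (1 - t) = 1)
  simp only [smul_eq_mul] at h
  calc a ^ t * b ^ (1 - t)
      = Real.exp (t * Real.log a + (1 - t) * Real.log b) := by
        rw [Real.rpow_def_of_pos ha, Real.rpow_def_of_pos hb, ← Real.exp_add]
        ring_nf
    _ < t * Real.exp (Real.log a) + (1 - t) * Real.exp (Real.log b) := h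
    _ = t * a + (1 - t) * b := by rw [Real.exp_log ha, Real.exp_log hb]

lemma holder2_le {p q r s t : ℝ} (hp : 0 < p) (hq : 0 < q) (hr : 0 < r) (hs : 0 < s)
    (ht0 : 0 < t) (ht1 : t < 1) :
    p ^ t * r ^ (1 - t) + q ^ t * s ^ (1 - t) ≤ (p + q) ^ t * (r + s) ^ (1 - t) := by
  have hA : 0 < p + q := by linarith
  have hB : 0 < r + s := by linarith
  have h1 := Real.geom_mean_le_arith_mean2_weighted ht0.le (by linarith : (0:ℝ) ≤ 1 - t)
    (div_pos hp hA).le (div_pos hr hB).le (by ring)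
  have h2 := Real.geom_mean_le_arith_mean2_weighted ht0.le (by linarith : (0:ℝ) ≤ 1 - t)
    (div_pos hq hA).le (div_pos hs hB).le (by ring)
  have hsum : (p/(p+q))^t*(r/(r+s))^(1-t) + (q/(p+q))^t*(s/(r+s))^(1-t) ≤ 1 := by
    have he : t*(p/(p+q)) + (1-t)*(r/(r+s)) + (t*(q/(p+q)) + (1-t)*(s/(r+s))) = 1 := by
      field_simp
      ring
    linarith
  have hpow : 0 < (p+q)^t * (r+s)^(1-t) :=
    mul_pos (Real.rpow_pos_of_pos hA t) (Real.rpow_pos_of_pos hB _)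
  have hrw : ∀ u v : ℝ, 0 ≤ u → 0 ≤ v →
      (u/(p+q))^t*(v/(r+s))^(1-t) * ((p+q)^t*(r+s)^(1-t)) = u^t*v^(1-t) := by
    intro u v hu hv
    rw [Real.div_rpow hu hA.le, Real.div_rpow hv hB.le, div_mul_div_comm,
      div_mul_cancel₀ _ (by positivity)]
  calc p^t*r^(1-t)+q^t*s^(1-t)
      = ((p/(p+q))^t*(r/(r+s))^(1-t) + (q/(p+q))^t*(s/(r+s))^(1-t)) * ((p+q)^t*(r+s)^(1-t)) := by
        rw [add_mul, hrw p r hp.le hr.le, hrw q s hq.le hs.le]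
    _ ≤ 1 * ((p+q)^t*(r+s)^(1-t)) := mul_le_mul_of_nonneg_right hsum hpow.le
    _ = _ := one_mul _

lemma holder2_lt {p q r s t : ℝ} (hp : 0 < p) (hq : 0 < q) (hr : 0 < r) (hs : 0 < s)
    (ht0 : 0 < t) (ht1 : t < 1) (hne : p * s ≠ q * r) :
    p ^ t * r ^ (1 - t) + q ^ t * s ^ (1 - t) < (p + q) ^ t * (r + s) ^ (1 - t) := by
  have hA : 0 < p + q := by linarith
  have hB : 0 < r + s := by linarith
  have hd : p/(p+q) ≠ r/(r+s) := by
    intro heq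
    rw [div_eq_div_iff hA.ne' hB.ne'] at heq
    apply hne
    nlinarith [heq]
  have h1 := amgm_lt (div_pos hp hA) (div_pos hr hB) hd ht0 ht1
  have h2 := Real.geom_mean_le_arith_mean2_weighted ht0.le (by linarith : (0:ℝ) ≤ 1 - t)
    (div_pos hq hA).le (div_pos hs hB).le (by ring)
  have hsum : (p/(p+q))^t*(r/(r+s))^(1-t) + (q/(p+q))^t*(s/(r+s))^(1-t) < 1 := by
    have he : t*(p/(p+q)) + (1-t)*(r/(r+s)) + (t*(q/(p+q)) + (1-t)*(s/(r+s))) = 1 := by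
      field_simp
      ring
    linarith
  have hpow : 0 < (p+q)^t * (r+s)^(1-t) :=
    mul_pos (Real.rpow_pos_of_pos hA t) (Real.rpow_pos_of_pos hB _)
  have hrw : ∀ u v : ℝ, 0 ≤ u → 0 ≤ v →
      (u/(p+q))^t*(v/(r+s))^(1-t) * ((p+q)^t*(r+s)^(1-t)) = u^t*v^(1-t) := by
    intro u v hu hv
    rw [Real.div_rpow hu hA.le, Real.div_rpow hv hB.le, div_mul_div_comm,
      div_mul_cancel₀ _ (by positivity)]
  calc p^t*r^(1-t)+q^t*s^(1-t)
      = ((p/(p+q))^t*(r/(r+s))^(1-t) + (q/(p+q))^t*(s/(r+s))^(1-t)) * ((p+q)^t*(r+s)^(1-t)) := by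
        rw [add_mul, hrw p r hp.le hr.le, hrw q s hq.le hs.le]
    _ < 1 * ((p+q)^t*(r+s)^(1-t)) := by
        exact (mul_lt_mul_of_pos_right hsum hpow)
    _ = _ := one_mul _

lemma holder4_le {a1 a2 a3 a4 b1 b2 b3 b4 t : ℝ}
    (ha1 : 0 < a1) (ha2 : 0 < a2) (ha3 : 0 < a3) (ha4 : 0 < a4)
    (hb1 : 0 < b1) (hb2 : 0 < b2) (hb3 : 0 < b3) (hb4 : 0 < b4)
    (ht0 : 0 < t) (ht1 : t < 1) :
    a1^t*b1^(1-t) + a2^t*b2^(1-t) + a3^t*b3^(1-t) + a4^t*b4^(1-t)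
      ≤ (a1+a2+a3+a4)^t * (b1+b2+b3+b4)^(1-t) := by
  have h12 := holder2_le ha1 ha2 hb1 hb2 ht0 ht1
  have h34 := holder2_le ha3 ha4 hb3 hb4 ht0 ht1
  have h := holder2_le (by linarith : (0:ℝ) < a1+a2) (by linarith : (0:ℝ) < a3+a4)
    (by linarith : (0:ℝ) < b1+b2) (by linarith : (0:ℝ) < b3+b4) ht0 ht1
  have e1 : a1+a2+a3+a4 = (a1+a2)+(a3+a4) := by ring
  have e2 : b1+b2+b3+b4 = (b1+b2)+(b3+b4) := by ring
  rw [e1, e2]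
  linarith

lemma rpow_combo {A B : ℝ} (hA : 0 < A) (hB : 0 < B) (t e : ℝ) :
    (A ^ t * B ^ (1 - t)) ^ e = (A ^ e) ^ t * (B ^ e) ^ (1 - t) := by
  rw [Real.mul_rpow (Real.rpow_nonneg hA.le _) (Real.rpow_nonneg hB.le _),
      ← Real.rpow_mul hA.le, ← Real.rpow_mul hB.le, mul_comm t e, mul_comm (1 - t) e,
      Real.rpow_mul hA.le, Real.rpow_mul hB.le]

lemma combined {e t : ℝ} (he : 0 < e) (ht0 : 0 < t) (ht1 : t < 1)
    {z1 z2 z3 z4 A1 A2 A3 A4 B1 B2 B3 B4 : ℝ}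
    (hz1 : 0 < z1) (hz2 : 0 < z2) (hz3 : 0 < z3) (hz4 : 0 < z4)
    (hA1 : 0 < A1) (hA2 : 0 < A2) (hA3 : 0 < A3) (hA4 : 0 < A4)
    (hB1 : 0 < B1) (hB2 : 0 < B2) (hB3 : 0 < B3) (hB4 : 0 < B4)
    (h1 : z1 ≤ A1 ^ t * B1 ^ (1 - t)) (h2 : z2 ≤ A2 ^ t * B2 ^ (1 - t))
    (h3 : z3 ≤ A3 ^ t * B3 ^ (1 - t)) (h4 : z4 ≤ A4 ^ t * B4 ^ (1 - t))
    (hst : z1 < A1 ^ t * B1 ^ (1 - t) ∨ z2 < A2 ^ t * B2 ^ (1 - t)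
      ∨ z3 < A3 ^ t * B3 ^ (1 - t)) :
    z1 ^ e + z2 ^ e + z3 ^ e + z4 ^ e
      < (A1 ^ e + A2 ^ e + A3 ^ e + A4 ^ e) ^ t * (B1 ^ e + B2 ^ e + B3 ^ e + B4 ^ e) ^ (1 - t) := by
  have k1 : z1 ^ e ≤ (A1 ^ e) ^ t * (B1 ^ e) ^ (1 - t) :=
    (Real.rpow_le_rpow hz1.le h1 he.le).trans_eq (rpow_combo hA1 hB1 t e)
  have k2 : z2 ^ e ≤ (A2 ^ e) ^ t * (B2 ^ e) ^ (1 - t) :=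
    (Real.rpow_le_rpow hz2.le h2 he.le).trans_eq (rpow_combo hA2 hB2 t e)
  have k3 : z3 ^ e ≤ (A3 ^ e) ^ t * (B3 ^ e) ^ (1 - t) :=
    (Real.rpow_le_rpow hz3.le h3 he.le).trans_eq (rpow_combo hA3 hB3 t e)
  have k4 : z4 ^ e ≤ (A4 ^ e) ^ t * (B4 ^ e) ^ (1 - t) :=
    (Real.rpow_le_rpow hz4.le h4 he.le).trans_eq (rpow_combo hA4 hB4 t e)
  have kk : z1 ^ e + z2 ^ e + z3 ^ e + z4 ^ e
      < (A1 ^ e) ^ t * (B1 ^ e) ^ (1 - t) + (A2 ^ e) ^ t * (B2 ^ e) ^ (1 - t)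
        + (A3 ^ e) ^ t * (B3 ^ e) ^ (1 - t) + (A4 ^ e) ^ t * (B4 ^ e) ^ (1 - t) := by
    rcases hst with h | h | h
    · have := (Real.rpow_lt_rpow hz1.le h he).trans_eq (rpow_combo hA1 hB1 t e)
      linarith
    · have := (Real.rpow_lt_rpow hz2.le h he).trans_eq (rpow_combo hA2 hB2 t e)
      linarith
    · have := (Real.rpow_lt_rpow hz3.le h he).trans_eq (rpow_combo hA3 hB3 t e)
      linarith
  exact kk.trans_le (holder4_le (Real.rpow_pos_of_pos hA1 e) (Real.rpow_pos_of_pos hA2 e)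
    (Real.rpow_pos_of_pos hA3 e) (Real.rpow_pos_of_pos hA4 e)
    (Real.rpow_pos_of_pos hB1 e) (Real.rpow_pos_of_pos hB2 e)
    (Real.rpow_pos_of_pos hB3 e) (Real.rpow_pos_of_pos hB4 e) ht0 ht1)

lemma prod_ne {a b a' b' η : ℝ} (hη : 0 < η) (h : a - a' ≠ b - b') :
    Real.exp (a / η) * Real.exp (b' / η) ≠ Real.exp (b / η) * Real.exp (a' / η) := by
  intro heq
  rw [← Real.exp_add, ← Real.exp_add, Real.exp_eq_exp] at heq
  apply h
  field_simp at heq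
  linarith

lemma main_core (ζ η c t : ℝ) (hζ : 0 < ζ) (hη : 0 < η) (ht0 : 0 < t) (ht1 : t < 1)
    {ptt ptf pft pff qtt qtf qft qff : ℝ}
    (hp1 : 0 < ptt) (hp2 : 0 < ptf) (hp3 : 0 < pft) (hp4 : 0 < pff)
    (hq1 : 0 < qtt) (hq2 : 0 < qtf) (hq3 : 0 < qft) (hq4 : 0 < qff)
    (hst : ptt * qtf ≠ ptf * qtt ∨ pft * qff ≠ pff * qft ∨ ptt * qft ≠ pft * qtt) :
    c + ζ * Real.log (
        (ptt^t*qtt^(1-t) + ptf^t*qtf^(1-t))^(η/ζ)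
      + (pft^t*qft^(1-t) + pff^t*qff^(1-t))^(η/ζ)
      + (ptt^t*qtt^(1-t) + pft^t*qft^(1-t))^(η/ζ)
      + (ptf^t*qtf^(1-t) + pff^t*qff^(1-t))^(η/ζ))
    < t * (c + ζ * Real.log ((ptt+ptf)^(η/ζ) + (pft+pff)^(η/ζ) + (ptt+pft)^(η/ζ) + (ptf+pff)^(η/ζ)))
      + (1-t) * (c + ζ * Real.log ((qtt+qtf)^(η/ζ) + (qft+qff)^(η/ζ) + (qtt+qft)^(η/ζ) + (qtf+qff)^(η/ζ))) := by
  have he : 0 < η / ζ := div_pos hη hζ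
  have h1 : ptt^t*qtt^(1-t) + ptf^t*qtf^(1-t) ≤ (ptt+ptf)^t * (qtt+qtf)^(1-t) :=
    holder2_le hp1 hp2 hq1 hq2 ht0 ht1
  have h2 : pft^t*qft^(1-t) + pff^t*qff^(1-t) ≤ (pft+pff)^t * (qft+qff)^(1-t) :=
    holder2_le hp3 hp4 hq3 hq4 ht0 ht1
  have h3 : ptt^t*qtt^(1-t) + pft^t*qft^(1-t) ≤ (ptt+pft)^t * (qtt+qft)^(1-t) :=
    holder2_le hp1 hp3 hq1 hq3 ht0 ht1
  have h4 : ptf^t*qtf^(1-t) + pff^t*qff^(1-t) ≤ (ptf+pff)^t * (qtf+qff)^(1-t) :=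
    holder2_le hp2 hp4 hq2 hq4 ht0 ht1
  have hst' : ptt^t*qtt^(1-t) + ptf^t*qtf^(1-t) < (ptt+ptf)^t * (qtt+qtf)^(1-t)
      ∨ pft^t*qft^(1-t) + pff^t*qff^(1-t) < (pft+pff)^t * (qft+qff)^(1-t)
      ∨ ptt^t*qtt^(1-t) + pft^t*qft^(1-t) < (ptt+pft)^t * (qtt+qft)^(1-t) := by
    rcases hst with h | h | h
    · exact Or.inl (holder2_lt hp1 hp2 hq1 hq2 ht0 ht1 h)
    · exact Or.inr (Or.inl (holder2_lt hp3 hp4 hq3 hq4 ht0 ht1 h))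
    · exact Or.inr (Or.inr (holder2_lt hp1 hp3 hq1 hq3 ht0 ht1 h))
  have key := combined he ht0 ht1
    (by positivity) (by positivity) (by positivity) (by positivity)
    (by positivity : (0:ℝ) < ptt+ptf) (by positivity : (0:ℝ) < pft+pff)
    (by positivity : (0:ℝ) < ptt+pft) (by positivity : (0:ℝ) < ptf+pff)
    (by positivity : (0:ℝ) < qtt+qtf) (by positivity : (0:ℝ) < qft+qff)
    (by positivity : (0:ℝ) < qtt+qft) (by positivity : (0:ℝ) < qtf+qff)
    h1 h2 h3 h4 hst'
  have hSx : (0:ℝ) < (ptt+ptf)^(η/ζ) + (pft+pff)^(η/ζ) + (ptt+pft)^(η/ζ) + (ptf+pff)^(η/ζ) := by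
    positivity
  have hSy : (0:ℝ) < (qtt+qtf)^(η/ζ) + (qft+qff)^(η/ζ) + (qtt+qft)^(η/ζ) + (qtf+qff)^(η/ζ) := by
    positivity
  have hSz : (0:ℝ) < (ptt^t*qtt^(1-t) + ptf^t*qtf^(1-t))^(η/ζ)
      + (pft^t*qft^(1-t) + pff^t*qff^(1-t))^(η/ζ)
      + (ptt^t*qtt^(1-t) + pft^t*qft^(1-t))^(η/ζ)
      + (ptf^t*qtf^(1-t) + pff^t*qff^(1-t))^(η/ζ) := by positivity
  have hlog : Real.log ((ptt^t*qtt^(1-t) + ptf^t*qtf^(1-t))^(η/ζ)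
      + (pft^t*qft^(1-t) + pff^t*qff^(1-t))^(η/ζ)
      + (ptt^t*qtt^(1-t) + pft^t*qft^(1-t))^(η/ζ)
      + (ptf^t*qtf^(1-t) + pff^t*qff^(1-t))^(η/ζ))
      < t * Real.log ((ptt+ptf)^(η/ζ) + (pft+pff)^(η/ζ) + (ptt+pft)^(η/ζ) + (ptf+pff)^(η/ζ))
      + (1-t) * Real.log ((qtt+qtf)^(η/ζ) + (qft+qff)^(η/ζ) + (qtt+qft)^(η/ζ) + (qtf+qff)^(η/ζ)) := by
    calc _ < Real.log (((ptt+ptf)^(η/ζ) + (pft+pff)^(η/ζ) + (ptt+pft)^(η/ζ) + (ptf+pff)^(η/ζ))^t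
        * ((qtt+qtf)^(η/ζ) + (qft+qff)^(η/ζ) + (qtt+qft)^(η/ζ) + (qtf+qff)^(η/ζ))^(1-t)) :=
          Real.log_lt_log hSz key
      _ = _ := by
          rw [Real.log_mul (by positivity) (by positivity), Real.log_rpow hSx, Real.log_rpow hSy]
  nlinarith [mul_lt_mul_of_pos_left hlog hζ]

/-- The 2×2 nested-logit surplus function is strictly convex modulo translations: for
`t ∈ (0,1)` and `x, y` with `x − y` not a constant vector,
`H*(tx + (1−t)y) < t·H*(x) + (1−t)·H*(y)`. -/
theorem stmt19 (ζ η c : ℝ) (hζ : 0 < ζ) (hη : 0 < η)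
    (x y : Bool × Bool → ℝ) (hxy : ¬∃ k : ℝ, ∀ θ, x θ - y θ = k)
    (t : ℝ) (ht0 : 0 < t) (ht1 : t < 1) :
    Hstar22 ζ η c (fun θ => t * x θ + (1 - t) * y θ)
      < t * Hstar22 ζ η c x + (1 - t) * Hstar22 ζ η c y := by
  have hrw : ∀ a b : ℝ, Real.exp ((t * a + (1 - t) * b) / η)
      = Real.exp (a / η) ^ t * Real.exp (b / η) ^ (1 - t) := by
    intro a b
    rw [Real.rpow_def_of_pos (Real.exp_pos _), Real.rpow_def_of_pos (Real.exp_pos _),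
      Real.log_exp, Real.log_exp, ← Real.exp_add]
    congr 1
    field_simp
  have hcases : x (true,true) - y (true,true) ≠ x (true,false) - y (true,false)
      ∨ x (false,true) - y (false,true) ≠ x (false,false) - y (false,false)
      ∨ x (true,true) - y (true,true) ≠ x (false,true) - y (false,true) := by
    by_contra hc
    push_neg at hc
    obtain ⟨e1, e2, e3⟩ := hc
    exact hxy ⟨x (true,true) - y (true,true), fun θ => by
      rcases θ with ⟨(_|_), (_|_)⟩ <;> linarith⟩
  simp only [Hstar22, hrw]
  exact main_core ζ η c t hζ hη ht0 ht1
    (Real.exp_pos _) (Real.exp_pos _) (Real.exp_pos _) (Real.exp_pos _)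
    (Real.exp_pos _) (Real.exp_pos _) (Real.exp_pos _) (Real.exp_pos _)
    (by rcases hcases with h | h | h
        · exact Or.inl (prod_ne hη h)
        · exact Or.inr (Or.inl (prod_ne hη h))
        · exact Or.inr (Or.inr (prod_ne hη h)))
end
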